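/- Suppose the constraints are population-level and boundedness and Lipschitz continuity hold. Let ε ≥ 0 and let (L, y, z, w) be a feasible point of the population-level CMFOMO problem whose objective value is at most ε. Define α := (1/c2)·(((C_p+1)^{|𝒯|+1} − 2C_p − 1)/C_p²)·√|S| and ζ3 := 1/c4 + α·(k·c_max + C_c·|S||A||𝒯|). Then for every policy π ∈ Π(L): 0 ≤ G_fea(π) ≤ ε·ζ3; and if moreover G_fea(π) = 0, then 0 ≤ G_opt(π) ≤ ε·[(|𝒯|+1)·ζ'1 + ζ'2], where β'_y := (|S||𝒯|(|𝒯|+1)/2)·r_max, β'_z := |S||A|(|𝒯|² − |𝒯| + 2)·r_max, ζ'1 := 1/c1 + α·(C_p·β'_y + C_r) and ζ'2 := 1/c3 + β'_z·α. -/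

import Mathlib

open Finset

namespace CMFG

/-- Membership in the probability simplex on a finite type. -/
def IsSimplex {X : Type*} [Fintype X] (f : X → ℝ) : Prop :=
  (∀ x, 0 ≤ f x) ∧ ∑ x, f x = 1

variable {S A : Type*} [Fintype S] [Fintype A]

/-- A (Markov, randomized) policy: `π t s ∈ Δ(A)` for every time `t` and state `s`. -/
def IsPolicy (π : ℕ → S → A → ℝ) : Prop := ∀ t s, IsSimplex (π t s)

/-- A mean-field flow: `L t ∈ Δ(S × A)` for every time `t`. -/
def IsFlow (L : ℕ → S × A → ℝ) : Prop := ∀ t, IsSimplex (L t)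

/-- The transition data is a Markov kernel: `p t s a m ∈ Δ(S)` whenever `m ∈ Δ(S × A)`. -/
def IsKernel (T : ℕ) (p : ℕ → S → A → (S × A → ℝ) → S → ℝ) : Prop :=
  ∀ t ≤ T, ∀ s a m, IsSimplex m → IsSimplex (p t s a m)

/-- The occupation measure `Ψ(π, L)` of a representative agent using policy `π`
under the mean-field flow `L`. -/
def psi (μ0 : S → ℝ) (p : ℕ → S → A → (S × A → ℝ) → S → ℝ)
    (π : ℕ → S → A → ℝ) (L : ℕ → S × A → ℝ) : ℕ → S × A → ℝ
  | 0 => fun sa => π 0 sa.1 sa.2 * μ0 sa.1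
  | t + 1 => fun sa =>
      π (t + 1) sa.1 sa.2 *
        ∑ sa' : S × A, p t sa'.1 sa'.2 (L t) sa.1 * psi μ0 p π L t sa'

/-- The mean-field flow `Ψ(π)` induced by the policy `π` alone. -/
def psiInd (μ0 : S → ℝ) (p : ℕ → S → A → (S × A → ℝ) → S → ℝ)
    (π : ℕ → S → A → ℝ) : ℕ → S × A → ℝ
  | 0 => fun sa => π 0 sa.1 sa.2 * μ0 sa.1
  | t + 1 => fun sa =>
      π (t + 1) sa.1 sa.2 *
        ∑ sa' : S × A, p t sa'.1 sa'.2 (psiInd μ0 p π t) sa.1 * psiInd μ0 p π t sa'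

/-- Expected cumulative reward `V^π(L)` of policy `π` under the mean-field flow `L`. -/
def V (T : ℕ) (μ0 : S → ℝ) (p : ℕ → S → A → (S × A → ℝ) → S → ℝ)
    (r : ℕ → S → A → (S × A → ℝ) → ℝ) (π : ℕ → S → A → ℝ) (L : ℕ → S × A → ℝ) : ℝ :=
  ∑ t ∈ Finset.range (T + 1), ∑ sa : S × A, r t sa.1 sa.2 (L t) * psi μ0 p π L t sa

/-- Expected cumulative cost `𝒞^π(L) ∈ ℝ^k` of policy `π` under the mean-field flow `L`. -/
def Cost (T k : ℕ) (μ0 : S → ℝ) (p : ℕ → S → A → (S × A → ℝ) → S → ℝ)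
    (c : ℕ → S → A → (S × A → ℝ) → Fin k → ℝ) (π : ℕ → S → A → ℝ)
    (L : ℕ → S × A → ℝ) : Fin k → ℝ :=
  fun i => ∑ t ∈ Finset.range (T + 1), ∑ sa : S × A, c t sa.1 sa.2 (L t) i * psi μ0 p π L t sa

/-- `π` is an optimal policy of the constrained MDP `CMDP(L)` with threshold `γ0`. -/
def IsCMDPOptimal (T k : ℕ) (μ0 : S → ℝ) (p : ℕ → S → A → (S × A → ℝ) → S → ℝ)
    (r : ℕ → S → A → (S × A → ℝ) → ℝ) (c : ℕ → S → A → (S × A → ℝ) → Fin k → ℝ)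
    (γ0 : Fin k → ℝ) (π : ℕ → S → A → ℝ) (L : ℕ → S × A → ℝ) : Prop :=
  IsPolicy π ∧ (∀ i, Cost T k μ0 p c π L i ≤ γ0 i) ∧
    ∀ π', IsPolicy π' → (∀ i, Cost T k μ0 p c π' L i ≤ γ0 i) →
      V T μ0 p r π' L ≤ V T μ0 p r π L

/-- `π` is an optimal policy of the unconstrained MDP `MDP(L)`. -/
def IsMDPOptimal (T : ℕ) (μ0 : S → ℝ) (p : ℕ → S → A → (S × A → ℝ) → S → ℝ)
    (r : ℕ → S → A → (S × A → ℝ) → ℝ) (π : ℕ → S → A → ℝ) (L : ℕ → S × A → ℝ) : Prop :=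
  IsPolicy π ∧ ∀ π', IsPolicy π' → V T μ0 p r π' L ≤ V T μ0 p r π L

/-- `(π, L)` is a Nash equilibrium of the constrained mean-field game (Definition 2.1):
optimality for `CMDP(L)` together with the consistency condition `L = Ψ(π)` on `𝒯`. -/
def IsCMFGNash (T k : ℕ) (μ0 : S → ℝ) (p : ℕ → S → A → (S × A → ℝ) → S → ℝ)
    (r : ℕ → S → A → (S × A → ℝ) → ℝ) (c : ℕ → S → A → (S × A → ℝ) → Fin k → ℝ)
    (γ0 : Fin k → ℝ) (π : ℕ → S → A → ℝ) (L : ℕ → S × A → ℝ) : Prop :=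
  IsCMDPOptimal T k μ0 p r c γ0 π L ∧ ∀ t ≤ T, L t = psiInd μ0 p π t

/-- Strict feasibility (Assumption 3.1) with margin `δ`. -/
def StrictFeasible (T k : ℕ) (μ0 : S → ℝ) (p : ℕ → S → A → (S × A → ℝ) → S → ℝ)
    (c : ℕ → S → A → (S × A → ℝ) → Fin k → ℝ) (γ0 : Fin k → ℝ) (δ : ℝ) : Prop :=
  0 < δ ∧ ∀ L, IsFlow L → ∀ i : Fin k, ∃ π, IsPolicy π ∧
    (∀ j, Cost T k μ0 p c π L j ≤ γ0 j) ∧ Cost T k μ0 p c π L i ≤ γ0 i - δ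

/-- Strengthened strict feasibility (Assumption 5.1) with margin `δ`. -/
def StrongFeasible (T k : ℕ) (μ0 : S → ℝ) (p : ℕ → S → A → (S × A → ℝ) → S → ℝ)
    (c : ℕ → S → A → (S × A → ℝ) → Fin k → ℝ) (γ0 : Fin k → ℝ) (δ : ℝ) : Prop :=
  0 < δ ∧ ∀ L, IsFlow L → ∃ π, IsPolicy π ∧ ∀ i, Cost T k μ0 p c π L i ≤ γ0 i - δ

/-- Continuity (Assumption 3.2): `p`, `r`, `c` are continuous in the mean-field argument. -/
def ContinuousData (T k : ℕ) (p : ℕ → S → A → (S × A → ℝ) → S → ℝ)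
    (r : ℕ → S → A → (S × A → ℝ) → ℝ)
    (c : ℕ → S → A → (S × A → ℝ) → Fin k → ℝ) : Prop :=
  (∀ t ≤ T, ∀ s a, ContinuousOn (fun m : S × A → ℝ => p t s a m) {m | IsSimplex m}) ∧
  (∀ t ≤ T, ∀ s a, ContinuousOn (fun m : S × A → ℝ => r t s a m) {m | IsSimplex m}) ∧
  (∀ t ≤ T, ∀ s a, ContinuousOn (fun m : S × A → ℝ => c t s a m) {m | IsSimplex m})

/-- Boundedness: `0 ≤ r ≤ rmax` and `0 ≤ c ≤ cmax` entrywise on the simplex. -/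
def BoundedData (T k : ℕ) (r : ℕ → S → A → (S × A → ℝ) → ℝ)
    (c : ℕ → S → A → (S × A → ℝ) → Fin k → ℝ) (rmax cmax : ℝ) : Prop :=
  ∀ t ≤ T, ∀ s a m, IsSimplex m →
    (0 ≤ r t s a m ∧ r t s a m ≤ rmax) ∧ ∀ i, 0 ≤ c t s a m i ∧ c t s a m i ≤ cmax

/-- The ℓ¹ norm of a finitely supported real vector. -/
def norm1 {J : Type*} [Fintype J] (v : J → ℝ) : ℝ := ∑ j, |v j|

/-- The ℓ² norm of a finitely supported real vector. -/
noncomputable def norm2 {J : Type*} [Fintype J] (v : J → ℝ) : ℝ :=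
  Real.sqrt (∑ j, (v j) ^ 2)

/-- Lipschitz continuity (Assumption 3.3) of `p`, `r`, `c` in the mean-field argument. -/
def LipschitzData (T k : ℕ) (p : ℕ → S → A → (S × A → ℝ) → S → ℝ)
    (r : ℕ → S → A → (S × A → ℝ) → ℝ)
    (c : ℕ → S → A → (S × A → ℝ) → Fin k → ℝ) (Cp Cr Cc : ℝ) : Prop :=
  0 < Cp ∧ 0 < Cr ∧ 0 < Cc ∧
  ∀ t ≤ T, ∀ m1 m2 : S × A → ℝ, IsSimplex m1 → IsSimplex m2 →
    ((∑ sa : S × A, ∑ s' : S, |p t sa.1 sa.2 m1 s' - p t sa.1 sa.2 m2 s'|) ≤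
        Cp * norm1 (fun sa => m1 sa - m2 sa)) ∧
    ((∑ sa : S × A, |r t sa.1 sa.2 m1 - r t sa.1 sa.2 m2|) ≤
        Cr * norm1 (fun sa => m1 sa - m2 sa)) ∧
    ((∑ sa : S × A, ∑ i, |c t sa.1 sa.2 m1 i - c t sa.1 sa.2 m2 i|) ≤
        Cc * norm1 (fun sa => m1 sa - m2 sa))

/-- Lipschitz continuity of the transition kernels alone. -/
def LipschitzKernel (T : ℕ) (p : ℕ → S → A → (S × A → ℝ) → S → ℝ) (Cp : ℝ) : Prop :=
  0 < Cp ∧ ∀ t ≤ T, ∀ m1 m2 : S × A → ℝ, IsSimplex m1 → IsSimplex m2 →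
    (∑ sa : S × A, ∑ s' : S, |p t sa.1 sa.2 m1 s' - p t sa.1 sa.2 m2 s'|) ≤
      Cp * norm1 (fun sa => m1 sa - m2 sa)

/-- The reward vector `r_L ∈ ℝ^{|S||A||𝒯|}`. -/
def rLvec (T : ℕ) (r : ℕ → S → A → (S × A → ℝ) → ℝ) (L : ℕ → S × A → ℝ) :
    Fin (T + 1) × S × A → ℝ :=
  fun x => r (x.1 : ℕ) x.2.1 x.2.2 (L (x.1 : ℕ))

/-- The cost matrix `c_L ∈ ℝ^{k × |S||A||𝒯|}`. -/
def cLmat (T k : ℕ) (c : ℕ → S → A → (S × A → ℝ) → Fin k → ℝ) (L : ℕ → S × A → ℝ) :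
    Fin k → Fin (T + 1) × S × A → ℝ :=
  fun i x => c (x.1 : ℕ) x.2.1 x.2.2 (L (x.1 : ℕ)) i

/-- The right-hand-side vector `b ∈ ℝ^{|S||𝒯|}`. -/
def bvec (T : ℕ) (μ0 : S → ℝ) : Fin (T + 1) × S → ℝ :=
  fun row => if (row.1 : ℕ) = T then μ0 row.2 else 0

/-- The constraint matrix `A_L ∈ ℝ^{|S||𝒯| × |S||A||𝒯|}`; `A_L d = b` encodes
`Σ_a d_0(s,a) = μ0(s)` and `Σ_a d_{t+1}(s,a) = Σ_{s',a'} p_t(s|s',a',L_t) d_t(s',a')`. -/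
def ALmat [DecidableEq S] (T : ℕ) (p : ℕ → S → A → (S × A → ℝ) → S → ℝ)
    (L : ℕ → S × A → ℝ) : Fin (T + 1) × S → Fin (T + 1) × S × A → ℝ :=
  fun row col =>
    if (row.1 : ℕ) < T then
      (if col.1 = row.1 then p (row.1 : ℕ) col.2.1 col.2.2 (L (row.1 : ℕ)) row.2 else 0) +
        (if (col.1 : ℕ) = (row.1 : ℕ) + 1 ∧ col.2.1 = row.2 then -1 else 0)
    else if (col.1 : ℕ) = 0 ∧ col.2.1 = row.2 then 1 else 0

/-- Matrix–vector product. -/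
def mulVec {I J : Type*} [Fintype J] (M : I → J → ℝ) (v : J → ℝ) : I → ℝ :=
  fun i => ∑ j, M i j * v j

/-- Transposed matrix–vector product `M^⊤ y`. -/
def tmulVec {I J : Type*} [Fintype I] (M : I → J → ℝ) (y : I → ℝ) : J → ℝ :=
  fun j => ∑ i, M i j * y i

/-- Euclidean inner product. -/
def dot {J : Type*} [Fintype J] (u v : J → ℝ) : ℝ := ∑ j, u j * v j

/-- View a vector indexed by `Fin (T+1) × S × A` as a time-indexed family. -/
def toFam (T : ℕ) (d : Fin (T + 1) × S × A → ℝ) : ℕ → S × A → ℝ :=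
  fun t sa => if h : t < T + 1 then d (⟨t, h⟩, sa.1, sa.2) else 0

/-- View a time-indexed family as a vector indexed by `Fin (T+1) × S × A`. -/
def toVec (T : ℕ) (d : ℕ → S × A → ℝ) : Fin (T + 1) × S × A → ℝ :=
  fun x => d (x.1 : ℕ) (x.2.1, x.2.2)

/-- `π ∈ Π(d)`: `π` is a policy inducing the occupation measure `d` wherever
`d` puts positive mass on a state. -/
def InPi (T : ℕ) (d : ℕ → S × A → ℝ) (π : ℕ → S → A → ℝ) : Prop :=
  IsPolicy π ∧ ∀ t ≤ T, ∀ s a, 0 < ∑ a' : A, d t (s, a') →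
    π t s a = d t (s, a) / ∑ a' : A, d t (s, a')

/-- Feasibility for the linear program `LP(L)`. -/
def LPFeasible [DecidableEq S] (T k : ℕ) (μ0 : S → ℝ)
    (p : ℕ → S → A → (S × A → ℝ) → S → ℝ)
    (c : ℕ → S → A → (S × A → ℝ) → Fin k → ℝ) (γ0 : Fin k → ℝ)
    (L : ℕ → S × A → ℝ) (d : Fin (T + 1) × S × A → ℝ) : Prop :=
  mulVec (ALmat T p L) d = bvec T μ0 ∧ (∀ i, dot (cLmat T k c L i) d ≤ γ0 i) ∧ ∀ x, 0 ≤ d x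

/-- Optimality for the linear program `LP(L)` (minimizing `-r_L^⊤ d`). -/
def LPOptimal [DecidableEq S] (T k : ℕ) (μ0 : S → ℝ)
    (p : ℕ → S → A → (S × A → ℝ) → S → ℝ) (r : ℕ → S → A → (S × A → ℝ) → ℝ)
    (c : ℕ → S → A → (S × A → ℝ) → Fin k → ℝ) (γ0 : Fin k → ℝ)
    (L : ℕ → S × A → ℝ) (d : Fin (T + 1) × S × A → ℝ) : Prop :=
  LPFeasible T k μ0 p c γ0 L d ∧
    ∀ d', LPFeasible T k μ0 p c γ0 L d' → dot (rLvec T r L) d' ≤ dot (rLvec T r L) d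

/-- The KKT system `𝒦(L)` associated with `LP(L)`. -/
def KKT [DecidableEq S] (T k : ℕ) (μ0 : S → ℝ)
    (p : ℕ → S → A → (S × A → ℝ) → S → ℝ) (r : ℕ → S → A → (S × A → ℝ) → ℝ)
    (c : ℕ → S → A → (S × A → ℝ) → Fin k → ℝ) (γ0 : Fin k → ℝ) (L : ℕ → S × A → ℝ)
    (d : Fin (T + 1) × S × A → ℝ) (y : Fin (T + 1) × S → ℝ)
    (z : Fin (T + 1) × S × A → ℝ) (lam : Fin k → ℝ) : Prop :=
  (∀ x, -(rLvec T r L x) =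
      tmulVec (ALmat T p L) y x + z x - ∑ i, cLmat T k c L i x * lam i) ∧
  mulVec (ALmat T p L) d = bvec T μ0 ∧
  (∀ i, dot (cLmat T k c L i) d ≤ γ0 i) ∧ (∀ x, 0 ≤ d x) ∧
  (∀ x, 0 ≤ z x) ∧ dot z d = 0 ∧ (∀ i, 0 ≤ lam i) ∧
  (∑ i, lam i * (dot (cLmat T k c L i) d - γ0 i)) = 0

/-- The population-level KKT system `𝒦^p(L)`. -/
def PopKKT [DecidableEq S] (T : ℕ) (μ0 : S → ℝ)
    (p : ℕ → S → A → (S × A → ℝ) → S → ℝ) (r : ℕ → S → A → (S × A → ℝ) → ℝ)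
    (L : ℕ → S × A → ℝ) (d : Fin (T + 1) × S × A → ℝ) (y : Fin (T + 1) × S → ℝ)
    (z : Fin (T + 1) × S × A → ℝ) : Prop :=
  (∀ x, -(rLvec T r L x) = tmulVec (ALmat T p L) y x + z x) ∧
  mulVec (ALmat T p L) d = bvec T μ0 ∧ (∀ x, 0 ≤ d x) ∧ (∀ x, 0 ≤ z x) ∧ dot z d = 0

/-- Bound for the dual variable `y` in CMFOMO. -/
noncomputable def yBound (cardS T : ℕ) (rmax cmax δ : ℝ) : ℝ :=
  (cardS : ℝ) * ((T : ℝ) + 1) * ((T : ℝ) + 2) / 2 * rmax * (1 + ((T : ℝ) + 1) / δ * cmax)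

/-- Bound for the dual variable `z` in CMFOMO. -/
noncomputable def zBound (cardS cardA T : ℕ) (rmax cmax δ : ℝ) : ℝ :=
  (cardS : ℝ) * (cardA : ℝ) * (((T : ℝ) + 1) ^ 2 - ((T : ℝ) + 1) + 2) * rmax *
    (1 + ((T : ℝ) + 1) / δ * cmax)

/-- Bound for the multiplier `λ` in CMFOMO. -/
noncomputable def lamBound (T : ℕ) (rmax δ : ℝ) : ℝ := ((T : ℝ) + 1) * rmax / δ

/-- The feasible region of the CMFOMO optimization problem. -/
noncomputable def CMFOMOFeasible (T k : ℕ) (rmax cmax δ : ℝ) (γ0 : Fin k → ℝ)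
    (Lv : Fin (T + 1) × S × A → ℝ) (y : Fin (T + 1) × S → ℝ)
    (z : Fin (T + 1) × S × A → ℝ) (lam w : Fin k → ℝ) : Prop :=
  (∀ x, 0 ≤ Lv x) ∧ (∀ t : Fin (T + 1), ∑ sa : S × A, Lv (t, sa.1, sa.2) = 1) ∧
  norm1 y ≤ yBound (Fintype.card S) T rmax cmax δ ∧
  (∀ x, 0 ≤ z x) ∧ norm1 z ≤ zBound (Fintype.card S) (Fintype.card A) T rmax cmax δ ∧
  (∀ i, 0 ≤ lam i ∧ lam i ≤ lamBound T rmax δ) ∧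
  (∀ i, 0 ≤ w i ∧ w i ≤ γ0 i)

/-- The CMFOMO objective function. -/
noncomputable def CMFOMOObj [DecidableEq S] (T k : ℕ) (μ0 : S → ℝ)
    (p : ℕ → S → A → (S × A → ℝ) → S → ℝ) (r : ℕ → S → A → (S × A → ℝ) → ℝ)
    (c : ℕ → S → A → (S × A → ℝ) → Fin k → ℝ) (γ0 : Fin k → ℝ)
    (c1 c2 c3 c4 c5 : ℝ) (Lv : Fin (T + 1) × S × A → ℝ) (y : Fin (T + 1) × S → ℝ)
    (z : Fin (T + 1) × S × A → ℝ) (lam w : Fin k → ℝ) : ℝ :=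
  c1 * norm2 (fun x => tmulVec (ALmat T p (toFam T Lv)) y x + z x +
        rLvec T r (toFam T Lv) x - ∑ i, cLmat T k c (toFam T Lv) i x * lam i) +
  c2 * norm2 (fun row => mulVec (ALmat T p (toFam T Lv)) Lv row - bvec T μ0 row) +
  c3 * dot z Lv +
  c4 * norm2 (fun i => γ0 i - dot (cLmat T k c (toFam T Lv) i) Lv - w i) +
  c5 * |∑ i, lam i * (γ0 i - dot (cLmat T k c (toFam T Lv) i) Lv)|

/-- The feasible region of the population-level CMFOMO problem. -/
noncomputable def PopCMFOMOFeasible (T k : ℕ) (rmax : ℝ) (γ0 : Fin k → ℝ)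
    (Lv : Fin (T + 1) × S × A → ℝ) (y : Fin (T + 1) × S → ℝ)
    (z : Fin (T + 1) × S × A → ℝ) (w : Fin k → ℝ) : Prop :=
  (∀ x, 0 ≤ Lv x) ∧ (∀ t : Fin (T + 1), ∑ sa : S × A, Lv (t, sa.1, sa.2) = 1) ∧
  norm1 y ≤ (Fintype.card S : ℝ) * ((T : ℝ) + 1) * ((T : ℝ) + 2) / 2 * rmax ∧
  (∀ x, 0 ≤ z x) ∧
  norm1 z ≤ (Fintype.card S : ℝ) * (Fintype.card A : ℝ) *
      (((T : ℝ) + 1) ^ 2 - ((T : ℝ) + 1) + 2) * rmax ∧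
  (∀ i, 0 ≤ w i ∧ w i ≤ γ0 i)

/-- The population-level CMFOMO objective function. -/
noncomputable def PopCMFOMOObj [DecidableEq S] (T k : ℕ) (μ0 : S → ℝ)
    (p : ℕ → S → A → (S × A → ℝ) → S → ℝ) (r : ℕ → S → A → (S × A → ℝ) → ℝ)
    (cp : ℕ → (S × A → ℝ) → Fin k → ℝ) (γ0 : Fin k → ℝ)
    (c1 c2 c3 c4 : ℝ) (Lv : Fin (T + 1) × S × A → ℝ) (y : Fin (T + 1) × S → ℝ)
    (z : Fin (T + 1) × S × A → ℝ) (w : Fin k → ℝ) : ℝ :=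
  c1 * norm2 (fun x => tmulVec (ALmat T p (toFam T Lv)) y x + z x + rLvec T r (toFam T Lv) x) +
  c2 * norm2 (fun row => mulVec (ALmat T p (toFam T Lv)) Lv row - bvec T μ0 row) +
  c3 * dot z Lv +
  c4 * norm2 (fun i => γ0 i -
    dot (cLmat T k (fun t _ _ m => cp t m) (toFam T Lv) i) Lv - w i)

/-- The optimal value `V*_c(L)` of the constrained MDP `CMDP(L)`. -/
noncomputable def Vstar (T k : ℕ) (μ0 : S → ℝ) (p : ℕ → S → A → (S × A → ℝ) → S → ℝ)
    (r : ℕ → S → A → (S × A → ℝ) → ℝ) (c : ℕ → S → A → (S × A → ℝ) → Fin k → ℝ)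
    (γ0 : Fin k → ℝ) (L : ℕ → S × A → ℝ) : ℝ :=
  sSup {v | ∃ π, IsPolicy π ∧ (∀ i, Cost T k μ0 p c π L i ≤ γ0 i) ∧ v = V T μ0 p r π L}

/-- The optimal value of the unconstrained MDP `MDP(L)`. -/
noncomputable def VstarU (T : ℕ) (μ0 : S → ℝ) (p : ℕ → S → A → (S × A → ℝ) → S → ℝ)
    (r : ℕ → S → A → (S × A → ℝ) → ℝ) (L : ℕ → S × A → ℝ) : ℝ :=
  sSup {v | ∃ π, IsPolicy π ∧ v = V T μ0 p r π L}

/-- The optimality gap `G_opt(π)`. -/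
noncomputable def Gopt (T k : ℕ) (μ0 : S → ℝ) (p : ℕ → S → A → (S × A → ℝ) → S → ℝ)
    (r : ℕ → S → A → (S × A → ℝ) → ℝ) (c : ℕ → S → A → (S × A → ℝ) → Fin k → ℝ)
    (γ0 : Fin k → ℝ) (π : ℕ → S → A → ℝ) : ℝ :=
  Vstar T k μ0 p r c γ0 (psiInd μ0 p π) - V T μ0 p r π (psiInd μ0 p π)

/-- The feasibility gap `G_fea(π)`. -/
noncomputable def Gfea (T k : ℕ) (μ0 : S → ℝ) (p : ℕ → S → A → (S × A → ℝ) → S → ℝ)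
    (c : ℕ → S → A → (S × A → ℝ) → Fin k → ℝ) (γ0 : Fin k → ℝ)
    (π : ℕ → S → A → ℝ) : ℝ :=
  norm2 (fun i : Fin k => min 0 (γ0 i - Cost T k μ0 p c π (psiInd μ0 p π) i))

/-- The population-level optimality gap. -/
noncomputable def GoptPop (T : ℕ) (μ0 : S → ℝ) (p : ℕ → S → A → (S × A → ℝ) → S → ℝ)
    (r : ℕ → S → A → (S × A → ℝ) → ℝ) (π : ℕ → S → A → ℝ) : ℝ :=
  VstarU T μ0 p r (psiInd μ0 p π) - V T μ0 p r π (psiInd μ0 p π)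

/-- The population-level feasibility gap. -/
noncomputable def GfeaPop (T k : ℕ) (μ0 : S → ℝ) (p : ℕ → S → A → (S × A → ℝ) → S → ℝ)
    (cp : ℕ → (S × A → ℝ) → Fin k → ℝ) (γ0 : Fin k → ℝ) (π : ℕ → S → A → ℝ) : ℝ :=
  norm2 (fun i : Fin k =>
    min 0 (γ0 i - ∑ t ∈ Finset.range (T + 1), cp t (psiInd μ0 p π t) i))

section NPlayer

variable [DecidableEq S] [DecidableEq A]

/-- Empirical state-action distribution of `N` players. -/
noncomputable def emp (N : ℕ) (x : Fin N → S × A) : S × A → ℝ :=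
  fun sa => (∑ i, if x i = sa then (1 : ℝ) else 0) / (N : ℝ)

/-- The joint law, at each time `t`, of the state-action profile of the `N` players
under the policy profile `πv`. -/
noncomputable def jointLaw (N : ℕ) (μ0 : S → ℝ) (p : ℕ → S → A → (S × A → ℝ) → S → ℝ)
    (πv : Fin N → ℕ → S → A → ℝ) : ℕ → (Fin N → S × A) → ℝ
  | 0 => fun x => ∏ i, μ0 (x i).1 * πv i 0 (x i).1 (x i).2
  | t + 1 => fun x => ∑ x' : Fin N → S × A, jointLaw N μ0 p πv t x' *
      ∏ i, p t (x' i).1 (x' i).2 (emp N x') (x i).1 * πv i (t + 1) (x i).1 (x i).2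

/-- Expected cumulative reward `V^{(i)}` of player `i` in the `N`-player game. -/
noncomputable def Vplayer (N T : ℕ) (μ0 : S → ℝ) (p : ℕ → S → A → (S × A → ℝ) → S → ℝ)
    (r : ℕ → S → A → (S × A → ℝ) → ℝ) (πv : Fin N → ℕ → S → A → ℝ) (i : Fin N) : ℝ :=
  ∑ t ∈ Finset.range (T + 1), ∑ x : Fin N → S × A,
    jointLaw N μ0 p πv t x * r t (x i).1 (x i).2 (emp N x)

/-- Expected cumulative cost `γ^{(i)}` of player `i` in the `N`-player game. -/
noncomputable def CostPlayer (N T k : ℕ) (μ0 : S → ℝ) (p : ℕ → S → A → (S × A → ℝ) → S → ℝ)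
    (c : ℕ → S → A → (S × A → ℝ) → Fin k → ℝ) (πv : Fin N → ℕ → S → A → ℝ)
    (i : Fin N) : Fin k → ℝ :=
  fun j => ∑ t ∈ Finset.range (T + 1), ∑ x : Fin N → S × A,
    jointLaw N μ0 p πv t x * c t (x i).1 (x i).2 (emp N x) j

/-- Feasibility gap `G_fea^{(i)}` of player `i` in the `N`-player game. -/
noncomputable def GfeaPlayer (N T k : ℕ) (μ0 : S → ℝ)
    (p : ℕ → S → A → (S × A → ℝ) → S → ℝ) (c : ℕ → S → A → (S × A → ℝ) → Fin k → ℝ)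
    (γ0 : Fin k → ℝ) (πv : Fin N → ℕ → S → A → ℝ) (i : Fin N) : ℝ :=
  norm2 (fun j : Fin k => min 0 (γ0 j - CostPlayer N T k μ0 p c πv i j))

/-- `(ε1, ε2)`-Nash equilibrium of the constrained `N`-player game. -/
noncomputable def IsEpsNash (N T k : ℕ) (μ0 : S → ℝ)
    (p : ℕ → S → A → (S × A → ℝ) → S → ℝ) (r : ℕ → S → A → (S × A → ℝ) → ℝ)
    (c : ℕ → S → A → (S × A → ℝ) → Fin k → ℝ) (γ0 : Fin k → ℝ)
    (πv : Fin N → ℕ → S → A → ℝ) (ε1 ε2 : ℝ) : Prop :=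
  ∀ i : Fin N,
    (∀ π', IsPolicy π' →
      GfeaPlayer N T k μ0 p c γ0 (Function.update πv i π') i = 0 →
      Vplayer N T μ0 p r (Function.update πv i π') i ≤ Vplayer N T μ0 p r πv i + ε1) ∧
    GfeaPlayer N T k μ0 p c γ0 πv i ≤ ε2

end NPlayer



section Aux

variable {S A : Type*} [Fintype S] [Fintype A]

lemma norm1_nonneg' {J : Type*} [Fintype J] (v : J → ℝ) : 0 ≤ norm1 v :=
  Finset.sum_nonneg fun _ _ => abs_nonneg _

lemma norm2_nonneg' {J : Type*} [Fintype J] (v : J → ℝ) : 0 ≤ norm2 v := Real.sqrt_nonneg _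

lemma abs_dot_le {J : Type*} [Fintype J] (u v : J → ℝ) : |dot u v| ≤ norm2 u * norm2 v := by
  have h := Finset.sum_mul_sq_le_sq_mul_sq Finset.univ u v
  calc |dot u v| = Real.sqrt ((dot u v)^2) := (Real.sqrt_sq_eq_abs _).symm
    _ ≤ Real.sqrt ((∑ j, (u j)^2) * ∑ j, (v j)^2) := Real.sqrt_le_sqrt h
    _ = norm2 u * norm2 v := Real.sqrt_mul (Finset.sum_nonneg fun _ _ => sq_nonneg _) _

lemma norm1_le_sqrt_card {J : Type*} [Fintype J] (v : J → ℝ) :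
    norm1 v ≤ Real.sqrt (Fintype.card J) * norm2 v := by
  have h := Finset.sum_mul_sq_le_sq_mul_sq Finset.univ (fun _ : J => (1:ℝ)) (fun j => |v j|)
  simp only [one_pow, one_mul, sq_abs, Finset.sum_const, Finset.card_univ, nsmul_eq_mul,
    mul_one] at h
  calc norm1 v = Real.sqrt ((norm1 v)^2) := (Real.sqrt_sq (norm1_nonneg' v)).symm
    _ ≤ Real.sqrt ((Fintype.card J : ℝ) * ∑ j, (v j)^2) := Real.sqrt_le_sqrt h
    _ = Real.sqrt (Fintype.card J) * norm2 v := Real.sqrt_mul (by positivity) _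

lemma norm2_le_norm1 {J : Type*} [Fintype J] (v : J → ℝ) : norm2 v ≤ norm1 v := by
  rw [norm2, ← Real.sqrt_sq (norm1_nonneg' v)]
  apply Real.sqrt_le_sqrt
  rw [norm1]
  calc ∑ j, (v j)^2 = ∑ j, |v j| * |v j| := by simp [sq, abs_mul_abs_self]
    _ ≤ ∑ j, (∑ i, |v i|) * |v j| := by
        apply Finset.sum_le_sum
        intro j _
        exact mul_le_mul_of_nonneg_right
          (Finset.single_le_sum (fun i _ => abs_nonneg (v i)) (Finset.mem_univ j)) (abs_nonneg _)
    _ = (∑ j, |v j|)^2 := by rw [← Finset.mul_sum, sq]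

lemma norm2_mono {J : Type*} [Fintype J] {u v : J → ℝ} (h : ∀ j, |u j| ≤ |v j|) :
    norm2 u ≤ norm2 v := by
  apply Real.sqrt_le_sqrt
  apply Finset.sum_le_sum
  intro j _
  rw [← sq_abs (u j), ← sq_abs (v j)]
  exact pow_le_pow_left₀ (abs_nonneg _) (h j) 2

lemma norm2_add_le {J : Type*} [Fintype J] (u v : J → ℝ) :
    norm2 (fun j => u j + v j) ≤ norm2 u + norm2 v := by
  rw [norm2, ← Real.sqrt_sq (add_nonneg (norm2_nonneg' u) (norm2_nonneg' v))]
  apply Real.sqrt_le_sqrt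
  have hcs : ∑ j, u j * v j ≤ norm2 u * norm2 v := (le_abs_self _).trans (abs_dot_le u v)
  have hu : ∑ j, (u j)^2 = (norm2 u)^2 :=
    (Real.sq_sqrt (Finset.sum_nonneg fun _ _ => sq_nonneg _)).symm
  have hv : ∑ j, (v j)^2 = (norm2 v)^2 :=
    (Real.sq_sqrt (Finset.sum_nonneg fun _ _ => sq_nonneg _)).symm
  calc ∑ j, (u j + v j)^2 = ∑ j, (u j)^2 + 2 * ∑ j, u j * v j + ∑ j, (v j)^2 := by
        rw [Finset.mul_sum, ← Finset.sum_add_distrib, ← Finset.sum_add_distrib]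
        exact Finset.sum_congr rfl fun j _ => by ring
    _ ≤ (norm2 u)^2 + 2 * (norm2 u * norm2 v) + (norm2 v)^2 := by
        rw [hu, hv]
        have h2 : (0:ℝ) ≤ 2 := by norm_num
        exact add_le_add_left (add_le_add_right (mul_le_mul_of_nonneg_left hcs h2) _) _
    _ = (norm2 u + norm2 v)^2 := by ring

lemma simplex_entry_le_one {J : Type*} [Fintype J] {f : J → ℝ} (h : IsSimplex f) (j : J) :
    f j ≤ 1 := by
  rw [← h.2]
  exact Finset.single_le_sum (fun i _ => h.1 i) (Finset.mem_univ j)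

lemma sum_sq_le_one {J : Type*} [Fintype J] {f : J → ℝ} (h : IsSimplex f) :
    ∑ j, (f j)^2 ≤ 1 := by
  calc ∑ j, (f j)^2 ≤ ∑ j, f j := Finset.sum_le_sum fun j _ => by
        rw [sq]
        nlinarith [h.1 j, simplex_entry_le_one h j]
    _ = 1 := h.2

lemma simplex_mul_policy {π : ℕ → S → A → ℝ} (hπ : IsPolicy π) (t : ℕ) {F : S → ℝ}
    (hF0 : ∀ s, 0 ≤ F s) (hF1 : ∑ s, F s = 1) :
    IsSimplex (fun sa : S × A => π t sa.1 sa.2 * F sa.1) := by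
  constructor
  · intro sa; exact mul_nonneg ((hπ t sa.1).1 sa.2) (hF0 sa.1)
  · rw [Fintype.sum_prod_type]
    calc ∑ s, ∑ a, π t s a * F s = ∑ s, F s := by
          refine Finset.sum_congr rfl fun s _ => ?_
          rw [← Finset.sum_mul, (hπ t s).2, one_mul]
      _ = 1 := hF1

lemma step_nonneg {q : S × A → S → ℝ} (hq : ∀ sa, IsSimplex (q sa)) {m : S × A → ℝ}
    (hm : ∀ sa, 0 ≤ m sa) (s : S) : 0 ≤ ∑ sa' : S × A, q sa' s * m sa' :=
  Finset.sum_nonneg fun sa' _ => mul_nonneg ((hq sa').1 s) (hm sa')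

lemma step_sum {q : S × A → S → ℝ} (hq : ∀ sa, IsSimplex (q sa)) {m : S × A → ℝ}
    (hm : ∑ sa, m sa = 1) : ∑ s, ∑ sa' : S × A, q sa' s * m sa' = 1 := by
  rw [Finset.sum_comm]
  calc ∑ sa' : S × A, ∑ s, q sa' s * m sa' = ∑ sa' : S × A, m sa' := by
        refine Finset.sum_congr rfl fun sa' _ => ?_
        rw [← Finset.sum_mul, (hq sa').2, one_mul]
    _ = 1 := hm

lemma psi_simplex (T : ℕ) (μ0 : S → ℝ) (p : ℕ → S → A → (S × A → ℝ) → S → ℝ)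
    (π : ℕ → S → A → ℝ) (M : ℕ → S × A → ℝ)
    (hμ0 : IsSimplex μ0) (hπ : IsPolicy π) (hp : IsKernel T p)
    (hM : ∀ t, t < T → IsSimplex (M t)) :
    ∀ t, t ≤ T → IsSimplex (psi μ0 p π M t) := by
  intro t
  induction t with
  | zero =>
    intro _
    exact simplex_mul_policy hπ 0 hμ0.1 hμ0.2
  | succ n ih =>
    intro hn
    have hn' : n ≤ T := by omega
    have hnT : n < T := by omega
    have hsn := ih hn'
    have hq : ∀ sa : S × A, IsSimplex (p n sa.1 sa.2 (M n)) :=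
      fun sa => hp n hn' sa.1 sa.2 (M n) (hM n hnT)
    show IsSimplex (fun sa : S × A => π (n+1) sa.1 sa.2 *
      ∑ sa' : S × A, p n sa'.1 sa'.2 (M n) sa.1 * psi μ0 p π M n sa')
    exact simplex_mul_policy hπ (n+1) (step_nonneg hq hsn.1) (step_sum hq hsn.2)

lemma psiInd_simplex (T : ℕ) (μ0 : S → ℝ) (p : ℕ → S → A → (S × A → ℝ) → S → ℝ)
    (π : ℕ → S → A → ℝ)
    (hμ0 : IsSimplex μ0) (hπ : IsPolicy π) (hp : IsKernel T p) :
    ∀ t, t ≤ T → IsSimplex (psiInd μ0 p π t) := by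
  intro t
  induction t with
  | zero =>
    intro _
    exact simplex_mul_policy hπ 0 hμ0.1 hμ0.2
  | succ n ih =>
    intro hn
    have hn' : n ≤ T := by omega
    have hsn := ih hn'
    have hq : ∀ sa : S × A, IsSimplex (p n sa.1 sa.2 (psiInd μ0 p π n)) :=
      fun sa => hp n hn' sa.1 sa.2 _ hsn
    show IsSimplex (fun sa : S × A => π (n+1) sa.1 sa.2 *
      ∑ sa' : S × A, p n sa'.1 sa'.2 (psiInd μ0 p π n) sa.1 * psiInd μ0 p π n sa')
    exact simplex_mul_policy hπ (n+1) (step_nonneg hq hsn.1) (step_sum hq hsn.2)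

lemma psiInd_eq_psi (μ0 : S → ℝ) (p : ℕ → S → A → (S × A → ℝ) → S → ℝ)
    (π : ℕ → S → A → ℝ) :
    ∀ t, psi μ0 p π (psiInd μ0 p π) t = psiInd μ0 p π t := by
  intro t
  induction t with
  | zero => rfl
  | succ n ih =>
    funext sa
    show π (n+1) sa.1 sa.2 *
        (∑ sa' : S × A, p n sa'.1 sa'.2 (psiInd μ0 p π n) sa.1 * psi μ0 p π (psiInd μ0 p π) n sa')
      = π (n+1) sa.1 sa.2 *
        ∑ sa' : S × A, p n sa'.1 sa'.2 (psiInd μ0 p π n) sa.1 * psiInd μ0 p π n sa'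
    rw [ih]

lemma psi_zero_marg (μ0 : S → ℝ) (p : ℕ → S → A → (S × A → ℝ) → S → ℝ)
    (π : ℕ → S → A → ℝ) (M : ℕ → S × A → ℝ) (hπ : IsPolicy π) (s : S) :
    ∑ a, psi μ0 p π M 0 (s, a) = μ0 s := by
  show ∑ a, π 0 s a * μ0 s = μ0 s
  rw [← Finset.sum_mul, (hπ 0 s).2, one_mul]

lemma psi_succ_marg (μ0 : S → ℝ) (p : ℕ → S → A → (S × A → ℝ) → S → ℝ)
    (π : ℕ → S → A → ℝ) (M : ℕ → S × A → ℝ) (hπ : IsPolicy π) (t : ℕ) (s : S) :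
    ∑ a, psi μ0 p π M (t+1) (s, a) =
      ∑ sa' : S × A, p t sa'.1 sa'.2 (M t) s * psi μ0 p π M t sa' := by
  show (∑ a, π (t+1) s a * ∑ sa' : S × A, p t sa'.1 sa'.2 (M t) s * psi μ0 p π M t sa') = _
  rw [← Finset.sum_mul, (hπ (t+1) s).2, one_mul]

section WithDec

variable [DecidableEq S]

lemma mulVec_ALmat (T : ℕ) (p : ℕ → S → A → (S × A → ℝ) → S → ℝ)
    (L : ℕ → S × A → ℝ) (d : Fin (T + 1) × S × A → ℝ) (row : Fin (T + 1) × S) :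
    mulVec (ALmat T p L) d row =
      if h : (row.1 : ℕ) < T then
        (∑ sa : S × A, p (row.1 : ℕ) sa.1 sa.2 (L (row.1 : ℕ)) row.2 * d (row.1, sa))
          - ∑ a : A, d (⟨(row.1 : ℕ) + 1, Nat.succ_lt_succ h⟩, row.2, a)
      else ∑ a : A, d (⟨0, Nat.succ_pos T⟩, row.2, a) := by
  unfold mulVec ALmat
  by_cases h : (row.1 : ℕ) < T
  · simp only [h, if_true, dif_pos h]
    set t1 : Fin (T+1) := ⟨(row.1 : ℕ) + 1, Nat.succ_lt_succ h⟩ with ht1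
    have key : ∀ col : Fin (T+1) × S × A,
        ((if col.1 = row.1 then p (row.1:ℕ) col.2.1 col.2.2 (L (row.1:ℕ)) row.2 else 0) +
          (if (col.1:ℕ) = (row.1:ℕ) + 1 ∧ col.2.1 = row.2 then -1 else 0)) * d col =
        (if col.1 = row.1 then p (row.1:ℕ) col.2.1 col.2.2 (L (row.1:ℕ)) row.2 * d col else 0) +
        (if col.1 = t1 ∧ col.2.1 = row.2 then -(d col) else 0) := by
      intro col
      have hiff : ((col.1:ℕ) = (row.1:ℕ) + 1 ∧ col.2.1 = row.2) ↔
          (col.1 = t1 ∧ col.2.1 = row.2) := by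
        simp [Fin.ext_iff, ht1]
      rw [add_mul, ite_mul, ite_mul, zero_mul, neg_one_mul, if_congr hiff rfl rfl]
    rw [Finset.sum_congr rfl (fun col _ => key col), Finset.sum_add_distrib]
    congr 1
    · rw [Fintype.sum_prod_type]
      rw [Finset.sum_eq_single row.1]
      · exact Finset.sum_congr rfl fun sa _ => if_pos rfl
      · intro t' _ ht'
        exact Finset.sum_eq_zero fun sa _ => if_neg ht'
      · intro habs; exact absurd (Finset.mem_univ _) habs
    · rw [Fintype.sum_prod_type]
      rw [Finset.sum_eq_single t1]
      · rw [Fintype.sum_prod_type, Finset.sum_eq_single row.2]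
        · simp [ht1]
        · intro s' _ hs'
          exact Finset.sum_eq_zero fun a _ => if_neg (by rintro ⟨-, h2⟩; exact hs' h2)
        · intro habs; exact absurd (Finset.mem_univ _) habs
      · intro t' _ ht'
        exact Finset.sum_eq_zero fun sa _ => if_neg (by rintro ⟨h1, -⟩; exact ht' h1)
      · intro habs; exact absurd (Finset.mem_univ _) habs
  · simp only [h, if_false]
    have key : ∀ col : Fin (T+1) × S × A,
        (if (col.1:ℕ) = 0 ∧ col.2.1 = row.2 then (1:ℝ) else 0) * d col =
        (if col.1 = (⟨0, Nat.succ_pos T⟩ : Fin (T+1)) ∧ col.2.1 = row.2 then d col else 0) := by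
      intro col
      have hiff : ((col.1:ℕ) = 0 ∧ col.2.1 = row.2) ↔
          (col.1 = (⟨0, Nat.succ_pos T⟩ : Fin (T+1)) ∧ col.2.1 = row.2) := by
        exact ⟨fun ⟨h1, h2⟩ => ⟨Fin.ext h1, h2⟩, fun ⟨h1, h2⟩ => ⟨congrArg Fin.val h1, h2⟩⟩
      rw [ite_mul, zero_mul, one_mul, if_congr hiff rfl rfl]
    rw [Finset.sum_congr rfl (fun col _ => key col), Fintype.sum_prod_type]
    rw [Finset.sum_eq_single (⟨0, Nat.succ_pos T⟩ : Fin (T+1))]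
    · rw [Fintype.sum_prod_type, Finset.sum_eq_single row.2]
      · simp
      · intro s' _ hs'
        exact Finset.sum_eq_zero fun a _ => if_neg (by rintro ⟨-, h2⟩; exact hs' h2)
      · intro habs; exact absurd (Finset.mem_univ _) habs
    · intro t' _ ht'
      exact Finset.sum_eq_zero fun sa _ => if_neg (by rintro ⟨h1, -⟩; exact ht' h1)
    · intro habs; exact absurd (Finset.mem_univ _) habs

lemma mulVec_AL_occ (T : ℕ) (μ0 : S → ℝ) (p : ℕ → S → A → (S × A → ℝ) → S → ℝ)
    (M : ℕ → S × A → ℝ) (π : ℕ → S → A → ℝ) (hπ : IsPolicy π) :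
    mulVec (ALmat T p M) (toVec T (psi μ0 p π M)) = bvec T μ0 := by
  funext row
  rw [mulVec_ALmat]
  by_cases h : (row.1 : ℕ) < T
  · rw [dif_pos h]
    have hb : bvec T μ0 row = 0 := if_neg (by omega)
    rw [hb]
    have h2 : ∑ a : A, toVec T (psi μ0 p π M) (⟨(row.1 : ℕ) + 1, Nat.succ_lt_succ h⟩, row.2, a)
        = ∑ a : A, psi μ0 p π M ((row.1 : ℕ) + 1) (row.2, a) := rfl
    rw [h2, psi_succ_marg μ0 p π M hπ (row.1 : ℕ) row.2]
    exact sub_self _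
  · rw [dif_neg h]
    have hb : bvec T μ0 row = μ0 row.2 := if_pos (by omega)
    rw [hb]
    exact psi_zero_marg μ0 p π M hπ row.2

end WithDec

lemma dot_tmulVec {I J : Type*} [Fintype I] [Fintype J] (M : I → J → ℝ) (y : I → ℝ)
    (d : J → ℝ) : dot (tmulVec M y) d = dot y (mulVec M d) := by
  unfold dot tmulVec mulVec
  simp only [Finset.sum_mul, Finset.mul_sum]
  rw [Finset.sum_comm]
  exact Finset.sum_congr rfl fun i _ => Finset.sum_congr rfl fun j _ => by ring

lemma sum_abs_kernel_le {q : S × A → S → ℝ} (hq : ∀ sa, IsSimplex (q sa)) (h : S × A → ℝ) :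
    ∑ s, |∑ sa' : S × A, q sa' s * h sa'| ≤ ∑ sa' : S × A, |h sa'| := by
  calc ∑ s, |∑ sa' : S × A, q sa' s * h sa'| ≤ ∑ s, ∑ sa' : S × A, q sa' s * |h sa'| := by
        refine Finset.sum_le_sum fun s _ => ?_
        refine (Finset.abs_sum_le_sum_abs _ _).trans ?_
        refine Finset.sum_le_sum fun sa' _ => ?_
        rw [abs_mul, abs_of_nonneg ((hq sa').1 s)]
    _ = ∑ sa' : S × A, |h sa'| := by
        rw [Finset.sum_comm]
        refine Finset.sum_congr rfl fun sa' _ => ?_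
        rw [← Finset.sum_mul, (hq sa').2, one_mul]

lemma sum_abs_diff_le {q1 q2 : S × A → S → ℝ} {g : S × A → ℝ}
    (hg0 : ∀ sa, 0 ≤ g sa) (hg1 : ∀ sa, g sa ≤ 1) :
    ∑ s, |∑ sa' : S × A, (q1 sa' s - q2 sa' s) * g sa'| ≤
      ∑ sa' : S × A, ∑ s, |q1 sa' s - q2 sa' s| := by
  calc ∑ s, |∑ sa' : S × A, (q1 sa' s - q2 sa' s) * g sa'|
      ≤ ∑ s, ∑ sa' : S × A, |q1 sa' s - q2 sa' s| * g sa' := by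
        refine Finset.sum_le_sum fun s _ => ?_
        refine (Finset.abs_sum_le_sum_abs _ _).trans ?_
        refine Finset.sum_le_sum fun sa' _ => ?_
        rw [abs_mul, abs_of_nonneg (hg0 sa')]
    _ = ∑ sa' : S × A, ∑ s, |q1 sa' s - q2 sa' s| * g sa' := Finset.sum_comm
    _ ≤ ∑ sa' : S × A, ∑ s, |q1 sa' s - q2 sa' s| := by
        refine Finset.sum_le_sum fun sa' _ => Finset.sum_le_sum fun s _ => ?_
        calc |q1 sa' s - q2 sa' s| * g sa' ≤ |q1 sa' s - q2 sa' s| * 1 :=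
              mul_le_mul_of_nonneg_left (hg1 sa') (abs_nonneg _)
          _ = |q1 sa' s - q2 sa' s| := mul_one _

lemma poly_nonneg {x : ℝ} (hx : 1 ≤ x) : 0 ≤ x^2 - x + 2 := by nlinarith

lemma Knum_nonneg (T : ℕ) {Cp : ℝ} (hCp : 0 < Cp) : 0 ≤ (Cp+1)^(T+2) - 2*Cp - 1 := by
  have hpow : 1 + ((T:ℝ)+2)*Cp ≤ (Cp+1)^(T+2) := by
    have h := one_add_mul_le_pow (show (-2:ℝ) ≤ Cp by linarith) (T+2)
    rw [add_comm Cp 1]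
    push_cast at h
    linarith
  nlinarith [hpow, mul_nonneg (Nat.cast_nonneg (α := ℝ) T) hCp.le]

lemma div_bound4 {c1 c2 c3 c4 a1 a2 a3 a4 ε : ℝ} (hc1 : 0 < c1) (hc2 : 0 < c2)
    (hc3 : 0 < c3) (hc4 : 0 < c4) (h1 : 0 ≤ a1) (h2 : 0 ≤ a2) (h3 : 0 ≤ a3) (h4 : 0 ≤ a4)
    (h : c1*a1 + c2*a2 + c3*a3 + c4*a4 ≤ ε) :
    a1 ≤ ε/c1 ∧ a2 ≤ ε/c2 ∧ a3 ≤ ε/c3 ∧ a4 ≤ ε/c4 := by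
  have m1 := mul_nonneg hc1.le h1
  have m2 := mul_nonneg hc2.le h2
  have m3 := mul_nonneg hc3.le h3
  have m4 := mul_nonneg hc4.le h4
  refine ⟨?_, ?_, ?_, ?_⟩
  · rw [le_div_iff₀ hc1]; nlinarith
  · rw [le_div_iff₀ hc2]; nlinarith
  · rw [le_div_iff₀ hc3]; nlinarith
  · rw [le_div_iff₀ hc4]; nlinarith

lemma esum_alg (T : ℕ) {Cp : ℝ} (hCp : 0 < Cp) {δ εα : ℝ}
    (hδ : 0 ≤ δ) (hK : δ * (((Cp+1)^(T+2) - 2*Cp - 1)/Cp^2) = εα) :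
    δ * (((Cp+1)^(T+1+1) - (Cp+1) - ((T:ℝ)+1)*Cp)/Cp^2) ≤ εα := by
  rw [← hK]
  refine mul_le_mul_of_nonneg_left ?_ hδ
  refine div_le_div_of_nonneg_right ?_ (by positivity)
  have h1 : (1:ℝ) ≤ (T:ℝ) + 1 := by
    have := Nat.cast_nonneg (α := ℝ) T
    linarith
  have h2 : Cp ≤ ((T:ℝ)+1) * Cp := le_mul_of_one_le_left hCp.le h1
  have h3 : (T+1+1 : ℕ) = T+2 := by omega
  rw [h3]
  linarith

lemma Cc_le_W {Cc kc S A Tp : ℝ} (hCc : 0 < Cc) (hkc : 0 ≤ kc)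
    (hS : 1 ≤ S) (hA : 1 ≤ A) (hT : 1 ≤ Tp) : Cc ≤ kc + Cc * S * A * Tp := by
  have h1 : Cc ≤ Cc*S := le_mul_of_one_le_right hCc.le hS
  have h2 : Cc*S ≤ Cc*S*A := le_mul_of_one_le_right (by nlinarith) hA
  have h3 : Cc*S*A ≤ Cc*S*A*Tp := le_mul_of_one_le_right (by nlinarith) hT
  linarith

lemma gfea_final {ε c4 α ζ3 W G Cc : ℝ} (hG : G ≤ ε/c4 + Cc*(ε*α)) (hζ : ζ3 = 1/c4 + α*W)
    (hεα : 0 ≤ ε*α) (hCc : 0 ≤ Cc) (hCcW : Cc ≤ W) : G ≤ ε*ζ3 := by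
  rw [hζ]
  have h1 : Cc*(ε*α) ≤ (ε*α)*W := by nlinarith
  calc G ≤ ε/c4 + Cc*(ε*α) := hG
    _ ≤ ε/c4 + (ε*α)*W := by linarith
    _ = ε*(1/c4 + α*W) := by ring

lemma sandwich1 {A B C D E0 : ℝ} (h1 : -E0 ≤ A + B + C) (h2 : C ≤ D) :
    -B - E0 - D ≤ A := by linarith

lemma sandwich2 {v Vp E0 D yb : ℝ} (h1 : v ≤ -yb + E0) (h2 : -yb - E0 - D ≤ Vp) :
    v ≤ Vp + (2*E0 + D) := by linarith

lemma sqrt_Tp1_le (T : ℕ) : Real.sqrt ((T:ℝ)+1) ≤ ((T:ℝ)+2)/2 := by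
  have h0 : (0:ℝ) ≤ (T:ℝ) := Nat.cast_nonneg T
  rw [show ((T:ℝ)+2)/2 = Real.sqrt ((((T:ℝ)+2)/2)^2) from (Real.sqrt_sq (by positivity)).symm]
  exact Real.sqrt_le_sqrt (by nlinarith [sq_nonneg (T:ℝ)])

lemma gopt_final (T : ℕ) {ε c1 c3 α Cp Cr βy' βz' ζ1' ζ2' : ℝ}
    (hε : 0 ≤ ε) (hεα : 0 ≤ ε*α) (hcoef : 0 ≤ Cp*βy' + Cr)
    (hζ1 : ζ1' = 1/c1 + α*(Cp*βy' + Cr)) (hζ2 : ζ2' = 1/c3 + βz'*α) :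
    2*((ε/c1)*(((T:ℝ)+2)/2) + βy'*(Cp*(ε*α)) + Cr*(ε*α)) + (ε/c3 + βz'*(ε*α))
      ≤ ε*(((T:ℝ)+2)*ζ1' + ζ2') := by
  rw [hζ1, hζ2]
  have hT : 0 ≤ (T:ℝ) := Nat.cast_nonneg T
  have h1 : 2*((ε*α)*(Cp*βy' + Cr)) ≤ ((T:ℝ)+2)*((ε*α)*(Cp*βy'+Cr)) := by
    nlinarith [mul_nonneg hεα hcoef]
  have e1 : 2*((ε/c1)*(((T:ℝ)+2)/2) + βy'*(Cp*(ε*α)) + Cr*(ε*α)) + (ε/c3 + βz'*(ε*α))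
      = (ε/c1)*((T:ℝ)+2) + 2*((ε*α)*(Cp*βy'+Cr)) + ε/c3 + βz'*(ε*α) := by ring
  have e2 : ε*(((T:ℝ)+2)*(1/c1 + α*(Cp*βy' + Cr)) + (1/c3 + βz'*α))
      = (ε/c1)*((T:ℝ)+2) + ((T:ℝ)+2)*((ε*α)*(Cp*βy'+Cr)) + ε/c3 + βz'*(ε*α) := by ring
  rw [e1, e2]
  linarith [h1]

end Aux


/-- Theorem 4.2 (Suboptimality of population-level CMFOMO): any feasible point of the
population-level CMFOMO problem with objective value at most `ε` yields, for every
`π ∈ Π(L)`, a feasibility gap at most `ε ζ3`; and whenever the feasibility gap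
vanishes, the optimality gap is bounded by `ε ((|𝒯|+1) ζ'1 + ζ'2)`. -/
theorem pop_cmfomo_suboptimality {S A : Type*} [Fintype S] [Fintype A] [DecidableEq S]
    [Nonempty S] [Nonempty A]
    (T k : ℕ) (μ0 : S → ℝ) (hμ0 : IsSimplex μ0)
    (p : ℕ → S → A → (S × A → ℝ) → S → ℝ) (hp : IsKernel T p)
    (r : ℕ → S → A → (S × A → ℝ) → ℝ)
    (cp : ℕ → (S × A → ℝ) → Fin k → ℝ) (γ0 : Fin k → ℝ)
    (rmax cmax Cp Cr Cc : ℝ)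
    (hb : BoundedData T k r (fun t _ _ m => cp t m) rmax cmax)
    (hlip : LipschitzData T k p r (fun t _ _ m => cp t m) Cp Cr Cc)
    (ε : ℝ) (hε : 0 ≤ ε)
    (c1 c2 c3 c4 : ℝ) (hc1 : 0 < c1) (hc2 : 0 < c2) (hc3 : 0 < c3) (hc4 : 0 < c4)
    (Lv : Fin (T + 1) × S × A → ℝ) (y : Fin (T + 1) × S → ℝ)
    (z : Fin (T + 1) × S × A → ℝ) (w : Fin k → ℝ)
    (hfea : PopCMFOMOFeasible T k rmax γ0 Lv y z w)
    (hobj : PopCMFOMOObj T k μ0 p r cp γ0 c1 c2 c3 c4 Lv y z w ≤ ε)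
    (α ζ3 βy' βz' ζ1' ζ2' : ℝ)
    (hα : α = 1 / c2 * (((Cp + 1) ^ (T + 2) - 2 * Cp - 1) / Cp ^ 2) *
        Real.sqrt (Fintype.card S))
    (hζ3 : ζ3 = 1 / c4 + α * ((k : ℝ) * cmax +
        Cc * (Fintype.card S : ℝ) * (Fintype.card A : ℝ) * ((T : ℝ) + 1)))
    (hβy' : βy' = (Fintype.card S : ℝ) * ((T : ℝ) + 1) * ((T : ℝ) + 2) / 2 * rmax)
    (hβz' : βz' = (Fintype.card S : ℝ) * (Fintype.card A : ℝ) *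
        (((T : ℝ) + 1) ^ 2 - ((T : ℝ) + 1) + 2) * rmax)
    (hζ1' : ζ1' = 1 / c1 + α * (Cp * βy' + Cr))
    (hζ2' : ζ2' = 1 / c3 + βz' * α) :
    ∀ π, InPi T (toFam T Lv) π →
      (0 ≤ GfeaPop T k μ0 p cp γ0 π ∧ GfeaPop T k μ0 p cp γ0 π ≤ ε * ζ3) ∧
      (GfeaPop T k μ0 p cp γ0 π = 0 →
        0 ≤ GoptPop T μ0 p r π ∧
        GoptPop T μ0 p r π ≤ ε * (((T : ℝ) + 2) * ζ1' + ζ2')) := by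
  intro π hmem
  obtain ⟨hπ, hπeq⟩ := hmem
  obtain ⟨hLv0, hLv1, hy1, hz0, hz1, hw⟩ := hfea
  obtain ⟨hCp, hCr, hCc, hlips⟩ := hlip
  set L : ℕ → S × A → ℝ := toFam T Lv with hLdef
  set Ψ : ℕ → S × A → ℝ := psiInd μ0 p π with hΨdef
  have hSpos : 0 < Fintype.card S := Fintype.card_pos
  have hApos : 0 < Fintype.card A := Fintype.card_pos
  have hTnn : (0:ℝ) ≤ (T:ℝ) := Nat.cast_nonneg T
  -- facts about L
  have hLval : ∀ (t' : Fin (T+1)) (sa : S × A), L (t' : ℕ) sa = Lv (t', sa.1, sa.2) := by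
    intro t' sa
    show toFam T Lv (t' : ℕ) sa = _
    rw [toFam, dif_pos t'.isLt]
  have hLsimp : ∀ t, t ≤ T → IsSimplex (L t) := by
    intro t ht
    have ht' : t < T + 1 := by omega
    constructor
    · intro sa
      show 0 ≤ toFam T Lv t sa
      rw [toFam, dif_pos ht']
      exact hLv0 _
    · calc ∑ sa : S × A, L t sa = ∑ sa : S × A, Lv (⟨t, ht'⟩, sa.1, sa.2) := by
            refine Finset.sum_congr rfl fun sa _ => ?_
            show toFam T Lv t sa = _
            rw [toFam, dif_pos ht']
        _ = 1 := hLv1 ⟨t, ht'⟩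
  have hΨsimp : ∀ t, t ≤ T → IsSimplex (Ψ t) := psiInd_simplex T μ0 p π hμ0 hπ hp
  -- rmax etc. nonneg
  have hrmax : 0 ≤ rmax := by
    obtain ⟨s⟩ := (inferInstance : Nonempty S)
    obtain ⟨a⟩ := (inferInstance : Nonempty A)
    have := (hb 0 (Nat.zero_le T) s a (L 0) (hLsimp 0 (Nat.zero_le T))).1
    exact le_trans this.1 this.2
  have hkcmax : 0 ≤ (k:ℝ) * cmax := by
    rcases Nat.eq_zero_or_pos k with hk | hk
    · simp [hk]
    · obtain ⟨s⟩ := (inferInstance : Nonempty S)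
      obtain ⟨a⟩ := (inferInstance : Nonempty A)
      have := ((hb 0 (Nat.zero_le T) s a (L 0) (hLsimp 0 (Nat.zero_le T))).2 ⟨0, hk⟩)
      have hc0 : 0 ≤ cmax := le_trans this.1 this.2
      positivity
  have hβy'0 : 0 ≤ βy' := by
    rw [hβy']; positivity
  have hβz'0 : 0 ≤ βz' := by
    rw [hβz']
    have : (0:ℝ) ≤ ((T:ℝ)+1)^2 - ((T:ℝ)+1) + 2 := poly_nonneg (by linarith)
    positivity
  -- α nonneg
  have hKnum : 0 ≤ (Cp+1)^(T+2) - 2*Cp - 1 := Knum_nonneg T hCp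
  have hα0 : 0 ≤ α := by
    rw [hα]
    have h1 : (0:ℝ) ≤ 1/c2 := by positivity
    have h2 : 0 ≤ ((Cp+1)^(T+2) - 2*Cp - 1)/Cp^2 := div_nonneg hKnum (sq_nonneg Cp)
    exact mul_nonneg (mul_nonneg h1 h2) (Real.sqrt_nonneg _)
  have hεα0 : 0 ≤ ε * α := mul_nonneg hε hα0
  -- objective terms
  unfold PopCMFOMOObj at hobj
  obtain ⟨ht1, ht2, ht3, ht4⟩ :=
    div_bound4 hc1 hc2 hc3 hc4 (norm2_nonneg' _) (norm2_nonneg' _)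
      (Finset.sum_nonneg fun x _ => mul_nonneg (hz0 x) (hLv0 x) :
        (0:ℝ) ≤ dot z Lv)
      (norm2_nonneg' _) hobj
  clear hobj
  -- per-time residual bound
  set δ : ℝ := Real.sqrt (Fintype.card S) * (ε / c2) with hδdef
  have hδ0 : 0 ≤ δ := by positivity
  have hres : ∀ t' : Fin (T+1),
      (∑ s, |mulVec (ALmat T p L) Lv (t', s) - bvec T μ0 (t', s)|) ≤ δ := by
    intro t'
    have hslice : norm2 (fun s : S => mulVec (ALmat T p L) Lv (t', s) - bvec T μ0 (t', s)) ≤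
        norm2 (fun row => mulVec (ALmat T p L) Lv row - bvec T μ0 row) := by
      apply Real.sqrt_le_sqrt
      calc ∑ s, (mulVec (ALmat T p L) Lv (t', s) - bvec T μ0 (t', s))^2
          ≤ ∑ u : Fin (T+1), ∑ s, (mulVec (ALmat T p L) Lv (u, s) - bvec T μ0 (u, s))^2 :=
            Finset.single_le_sum
              (f := fun u => ∑ s, (mulVec (ALmat T p L) Lv (u, s) - bvec T μ0 (u, s))^2)
              (fun u _ => Finset.sum_nonneg fun s _ => sq_nonneg _) (Finset.mem_univ t')
        _ = ∑ row : Fin (T+1) × S, (mulVec (ALmat T p L) Lv row - bvec T μ0 row)^2 :=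
            (Fintype.sum_prod_type (f := fun row : Fin (T+1) × S =>
              (mulVec (ALmat T p L) Lv row - bvec T μ0 row)^2)).symm
    calc (∑ s, |mulVec (ALmat T p L) Lv (t', s) - bvec T μ0 (t', s)|)
        = norm1 (fun s : S => mulVec (ALmat T p L) Lv (t', s) - bvec T μ0 (t', s)) := rfl
      _ ≤ Real.sqrt (Fintype.card S) *
          norm2 (fun s : S => mulVec (ALmat T p L) Lv (t', s) - bvec T μ0 (t', s)) :=
            norm1_le_sqrt_card _
      _ ≤ Real.sqrt (Fintype.card S) *
          norm2 (fun row => mulVec (ALmat T p L) Lv row - bvec T μ0 row) :=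
            mul_le_mul_of_nonneg_left hslice (Real.sqrt_nonneg _)
      _ ≤ δ := by
            rw [hδdef]
            exact mul_le_mul_of_nonneg_left ht2 (Real.sqrt_nonneg _)
  -- the flow error
  set e : ℕ → ℝ := fun t => ∑ sa : S × A, |Ψ t sa - L t sa| with hedef
  have he0 : ∀ t, 0 ≤ e t := fun t => Finset.sum_nonneg fun sa _ => abs_nonneg _
  have hcollapse : ∀ t, t ≤ T → ∀ F : S → ℝ,
      (∀ sa : S × A, Ψ t sa = π t sa.1 sa.2 * F sa.1) →
      e t = ∑ s, |F s - ∑ a, L t (s, a)| := by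
    intro t ht F hF
    show (∑ sa : S × A, |Ψ t sa - L t sa|) = _
    rw [Fintype.sum_prod_type]
    refine Finset.sum_congr rfl fun s _ => ?_
    have hm0 : 0 ≤ ∑ a, L t (s, a) := Finset.sum_nonneg fun a _ => (hLsimp t ht).1 (s, a)
    rcases lt_or_eq_of_le hm0 with hpos | hzero
    · have hLa : ∀ a, L t (s, a) = π t s a * ∑ a', L t (s, a') := by
        intro a
        rw [hπeq t ht s a hpos]
        exact (div_mul_cancel₀ _ (ne_of_gt hpos)).symm
      calc ∑ a, |Ψ t (s,a) - L t (s,a)| = ∑ a, π t s a * |F s - ∑ a', L t (s,a')| := by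
            refine Finset.sum_congr rfl fun a _ => ?_
            rw [hF (s,a), hLa a, ← mul_sub, abs_mul, abs_of_nonneg ((hπ t s).1 a)]
        _ = |F s - ∑ a', L t (s,a')| := by rw [← Finset.sum_mul, (hπ t s).2, one_mul]
    · have hLa : ∀ a, L t (s, a) = 0 := by
        intro a
        exact (Finset.sum_eq_zero_iff_of_nonneg
          (fun a _ => (hLsimp t ht).1 (s,a))).mp hzero.symm a (Finset.mem_univ a)
      calc ∑ a, |Ψ t (s,a) - L t (s,a)| = ∑ a, π t s a * |F s| := by
            refine Finset.sum_congr rfl fun a _ => ?_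
            rw [hF (s,a), hLa a, sub_zero, abs_mul, abs_of_nonneg ((hπ t s).1 a)]
        _ = |F s| := by rw [← Finset.sum_mul, (hπ t s).2, one_mul]
        _ = |F s - ∑ a, L t (s,a)| := by rw [← hzero, sub_zero]
  have hebound : ∀ t, t ≤ T → e t ≤ δ * (((Cp+1)^(t+1) - 1)/Cp) := by
    intro t
    induction t with
    | zero =>
      intro _
      have hF : ∀ sa : S × A, Ψ 0 sa = π 0 sa.1 sa.2 * μ0 sa.1 := fun sa => rfl
      rw [hcollapse 0 (Nat.zero_le T) μ0 hF]
      have hrowT := hres (Fin.last T)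
      have heq : ∀ s : S, mulVec (ALmat T p L) Lv (Fin.last T, s) - bvec T μ0 (Fin.last T, s)
          = (∑ a, L 0 (s, a)) - μ0 s := by
        intro s
        rw [mulVec_ALmat, dif_neg (by simp [Fin.last])]
        have hbv : bvec T μ0 (Fin.last T, s) = μ0 s := if_pos (by simp [Fin.last])
        rw [hbv]
        congr 1
      calc (∑ s, |μ0 s - ∑ a, L 0 (s,a)|)
          = ∑ s, |mulVec (ALmat T p L) Lv (Fin.last T, s) - bvec T μ0 (Fin.last T, s)| := by
            refine Finset.sum_congr rfl fun s _ => ?_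
            rw [heq s, abs_sub_comm]
        _ ≤ δ := hrowT
        _ = δ * (((Cp+1)^(0+1) - 1)/Cp) := by
            have h1 : ((Cp+1)^(0+1) - 1)/Cp = 1 := by
              rw [pow_one]
              field_simp
              ring
            rw [h1, mul_one]
    | succ n ih =>
      intro hn
      have hn' : n ≤ T := by omega
      have hnT : n < T := by omega
      have ihe := ih hn'
      have hF : ∀ sa : S × A, Ψ (n+1) sa = π (n+1) sa.1 sa.2 *
          ∑ sa' : S × A, p n sa'.1 sa'.2 (Ψ n) sa.1 * Ψ n sa' := fun sa => rfl
      rw [hcollapse (n+1) hn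
        (fun s => ∑ sa' : S × A, p n sa'.1 sa'.2 (Ψ n) s * Ψ n sa') hF]
      set F : S → ℝ := fun s => ∑ sa' : S × A, p n sa'.1 sa'.2 (Ψ n) s * Ψ n sa' with hFdef
      set G : S → ℝ := fun s => ∑ sa' : S × A, p n sa'.1 sa'.2 (L n) s * L n sa' with hGdef
      have htri : (∑ s, |F s - ∑ a, L (n+1) (s,a)|) ≤
          (∑ s, |F s - G s|) + ∑ s, |G s - ∑ a, L (n+1) (s,a)| := by
        rw [← Finset.sum_add_distrib]
        refine Finset.sum_le_sum fun s _ => ?_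
        calc |F s - ∑ a, L (n+1) (s,a)| = |(F s - G s) + (G s - ∑ a, L (n+1) (s,a))| := by
              ring_nf
          _ ≤ _ := abs_add_le _ _
      have h2 : (∑ s, |G s - ∑ a, L (n+1) (s,a)|) ≤ δ := by
        have hrow := hres ⟨n, by omega⟩
        have heq : ∀ s : S, mulVec (ALmat T p L) Lv (⟨n, by omega⟩, s)
            - bvec T μ0 (⟨n, by omega⟩, s) = G s - ∑ a, L (n+1) (s, a) := by
          intro s
          rw [mulVec_ALmat, dif_pos (show ((⟨n, by omega⟩ : Fin (T+1)) : ℕ) < T from hnT)]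
          have hbv : bvec T μ0 (⟨n, by omega⟩, s) = 0 := if_neg (by simp; omega)
          rw [hbv, sub_zero]
          congr 1
          · refine Finset.sum_congr rfl fun sa _ => ?_
            congr 1
            exact (hLval ⟨n, by omega⟩ sa).symm
          · refine Finset.sum_congr rfl fun a _ => ?_
            exact (hLval ⟨n+1, by omega⟩ (s, a)).symm
        calc (∑ s, |G s - ∑ a, L (n+1) (s,a)|)
            = ∑ s, |mulVec (ALmat T p L) Lv (⟨n, by omega⟩, s)
                - bvec T μ0 (⟨n, by omega⟩, s)| := by
              refine Finset.sum_congr rfl fun s _ => ?_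
              rw [heq s]
          _ ≤ δ := hrow
      have h3 : (∑ s, |F s - G s|) ≤ (1 + Cp) * e n := by
        have hdecomp : ∀ s, F s - G s =
            (∑ sa' : S × A, p n sa'.1 sa'.2 (Ψ n) s * (Ψ n sa' - L n sa'))
            + ∑ sa' : S × A, (p n sa'.1 sa'.2 (Ψ n) s - p n sa'.1 sa'.2 (L n) s) * L n sa' := by
          intro s
          rw [hFdef, hGdef, ← Finset.sum_add_distrib, ← Finset.sum_sub_distrib]
          refine Finset.sum_congr rfl fun sa' _ => ?_
          ring
        have hA : (∑ s, |∑ sa' : S × A, p n sa'.1 sa'.2 (Ψ n) s * (Ψ n sa' - L n sa')|) ≤ e n := by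
          have hq : ∀ sa : S × A, IsSimplex (p n sa.1 sa.2 (Ψ n)) :=
            fun sa => hp n hn' sa.1 sa.2 _ (hΨsimp n hn')
          exact sum_abs_kernel_le hq _
        have hB : (∑ s, |∑ sa' : S × A,
            (p n sa'.1 sa'.2 (Ψ n) s - p n sa'.1 sa'.2 (L n) s) * L n sa'|) ≤ Cp * e n := by
          have hg0 : ∀ sa : S × A, 0 ≤ L n sa := (hLsimp n hn').1
          have hg1 : ∀ sa : S × A, L n sa ≤ 1 := simplex_entry_le_one (hLsimp n hn')
          refine (sum_abs_diff_le hg0 hg1).trans ?_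
          have := (hlips n hn' (Ψ n) (L n) (hΨsimp n hn') (hLsimp n hn')).1
          exact this
        calc (∑ s, |F s - G s|)
            ≤ (∑ s, |∑ sa' : S × A, p n sa'.1 sa'.2 (Ψ n) s * (Ψ n sa' - L n sa')|)
              + ∑ s, |∑ sa' : S × A,
                (p n sa'.1 sa'.2 (Ψ n) s - p n sa'.1 sa'.2 (L n) s) * L n sa'| := by
              rw [← Finset.sum_add_distrib]
              refine Finset.sum_le_sum fun s _ => ?_
              rw [hdecomp s]
              exact abs_add_le _ _
          _ ≤ e n + Cp * e n := add_le_add hA hB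
          _ = (1 + Cp) * e n := by ring
      have halg : (1+Cp) * (δ * (((Cp+1)^(n+1) - 1)/Cp)) + δ
          = δ * (((Cp+1)^(n+1+1) - 1)/Cp) := by
        field_simp
        ring
      calc (∑ s, |F s - ∑ a, L (n+1) (s,a)|)
          ≤ (∑ s, |F s - G s|) + ∑ s, |G s - ∑ a, L (n+1) (s,a)| := htri
        _ ≤ (1 + Cp) * e n + δ := add_le_add h3 h2
        _ ≤ (1 + Cp) * (δ * (((Cp+1)^(n+1) - 1)/Cp)) + δ := by
            have h1Cp : (0:ℝ) ≤ 1 + Cp := by linarith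
            exact add_le_add_left (mul_le_mul_of_nonneg_left ihe h1Cp) _
        _ = δ * (((Cp+1)^(n+1+1) - 1)/Cp) := halg
  have hCp0 : Cp ≠ 0 := ne_of_gt hCp
  have hgeom : ∀ n : ℕ, (∑ t ∈ Finset.range n, (((Cp+1)^(t+1) - 1)/Cp))
      = ((Cp+1)^(n+1) - (Cp+1) - n*Cp)/Cp^2 := by
    intro n
    induction n with
    | zero => simp
    | succ m ihm =>
      rw [Finset.sum_range_succ, ihm]
      push_cast
      field_simp
      ring
  have hKeq : δ * (((Cp+1)^(T+2) - 2*Cp - 1)/Cp^2) = ε * α := by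
    rw [hα, hδdef]
    ring
  have hEsum : (∑ t ∈ Finset.range (T+1), e t) ≤ ε * α := by
    calc (∑ t ∈ Finset.range (T+1), e t)
        ≤ ∑ t ∈ Finset.range (T+1), δ * (((Cp+1)^(t+1) - 1)/Cp) := by
          refine Finset.sum_le_sum fun t htm => ?_
          exact hebound t (Nat.lt_succ_iff.mp (Finset.mem_range.mp htm))
      _ = δ * (((Cp+1)^(T+1+1) - (Cp+1) - ((T:ℝ)+1)*Cp)/Cp^2) := by
          rw [← Finset.mul_sum, hgeom (T+1)]
          push_cast
          ring_nf
      _ ≤ ε * α := esum_alg T hCp hδ0 hKeq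
  -- cost dot formula
  have hdotc : ∀ i, dot (cLmat T k (fun t _ _ m => cp t m) L i) Lv
      = ∑ t ∈ Finset.range (T+1), cp t (L t) i := by
    intro i
    calc dot (cLmat T k (fun t _ _ m => cp t m) L i) Lv
        = ∑ t' : Fin (T+1), ∑ sa : S × A, cp (t':ℕ) (L (t':ℕ)) i * Lv (t', sa) :=
          Fintype.sum_prod_type (f := fun x : Fin (T+1) × S × A =>
            cLmat T k (fun t _ _ m => cp t m) L i x * Lv x)
      _ = ∑ t' : Fin (T+1), cp (t':ℕ) (L (t':ℕ)) i := by
          refine Finset.sum_congr rfl fun t' _ => ?_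
          rw [← Finset.mul_sum]
          have h1 : (∑ sa : S × A, Lv (t', sa)) = 1 := hLv1 t'
          rw [h1, mul_one]
      _ = ∑ t ∈ Finset.range (T+1), cp t (L t) i :=
          Fin.sum_univ_eq_sum_range (fun t => cp t (L t) i) (T+1)
  -- total cost discrepancy
  have hΔsum : (∑ i, ∑ t ∈ Finset.range (T+1), |cp t (Ψ t) i - cp t (L t) i|)
      ≤ Cc * (ε*α) := by
    rw [Finset.sum_comm]
    calc (∑ t ∈ Finset.range (T+1), ∑ i, |cp t (Ψ t) i - cp t (L t) i|)
        ≤ ∑ t ∈ Finset.range (T+1), Cc * e t := by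
          refine Finset.sum_le_sum fun t htm => ?_
          have htT : t ≤ T := Nat.lt_succ_iff.mp (Finset.mem_range.mp htm)
          have hlipc : (∑ sa : S × A, ∑ i, |cp t (Ψ t) i - cp t (L t) i|) ≤ Cc * e t :=
            (hlips t htT (Ψ t) (L t) (hΨsimp t htT) (hLsimp t htT)).2.2
          have hconst : (∑ sa : S × A, ∑ i, |cp t (Ψ t) i - cp t (L t) i|)
              = (Fintype.card (S×A) : ℝ) * ∑ i, |cp t (Ψ t) i - cp t (L t) i| := by
            rw [Finset.sum_const, Finset.card_univ, nsmul_eq_mul]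
          have hcard1 : (1:ℝ) ≤ (Fintype.card (S×A) : ℝ) :=
            Nat.one_le_cast.mpr Fintype.card_pos
          have hinner0 : 0 ≤ ∑ i, |cp t (Ψ t) i - cp t (L t) i| :=
            Finset.sum_nonneg fun _ _ => abs_nonneg _
          calc (∑ i, |cp t (Ψ t) i - cp t (L t) i|)
              ≤ (Fintype.card (S×A) : ℝ) * ∑ i, |cp t (Ψ t) i - cp t (L t) i| :=
                le_mul_of_one_le_left hinner0 hcard1
            _ = ∑ sa : S × A, ∑ i, |cp t (Ψ t) i - cp t (L t) i| := hconst.symm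
            _ ≤ Cc * e t := hlipc
      _ = Cc * ∑ t ∈ Finset.range (T+1), e t := by rw [Finset.mul_sum]
      _ ≤ Cc * (ε*α) := mul_le_mul_of_nonneg_left hEsum hCc.le
  -- entrywise feasibility bound
  have hentry : ∀ i, |min 0 (γ0 i - ∑ t ∈ Finset.range (T+1), cp t (Ψ t) i)|
      ≤ |γ0 i - dot (cLmat T k (fun t _ _ m => cp t m) L i) Lv - w i|
        + ∑ t ∈ Finset.range (T+1), |cp t (Ψ t) i - cp t (L t) i| := by
    intro i
    set X := γ0 i - ∑ t ∈ Finset.range (T+1), cp t (Ψ t) i with hX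
    set u := γ0 i - dot (cLmat T k (fun t _ _ m => cp t m) L i) Lv - w i with hu
    set D := ∑ t ∈ Finset.range (T+1), |cp t (Ψ t) i - cp t (L t) i| with hD
    have hD0 : 0 ≤ D := Finset.sum_nonneg fun _ _ => abs_nonneg _
    have hdiff : -D ≤ (∑ t ∈ Finset.range (T+1), cp t (L t) i)
        - ∑ t ∈ Finset.range (T+1), cp t (Ψ t) i := by
      have hstep : ∀ t ∈ Finset.range (T+1),
          -(|cp t (Ψ t) i - cp t (L t) i|) ≤ cp t (L t) i - cp t (Ψ t) i := by
        intro t _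
        have := le_abs_self (cp t (Ψ t) i - cp t (L t) i)
        linarith
      calc -D = ∑ t ∈ Finset.range (T+1), -(|cp t (Ψ t) i - cp t (L t) i|) := by
            rw [hD, ← Finset.sum_neg_distrib]
        _ ≤ ∑ t ∈ Finset.range (T+1), (cp t (L t) i - cp t (Ψ t) i) :=
            Finset.sum_le_sum hstep
        _ = _ := Finset.sum_sub_distrib _ _
    have hXge : u - D ≤ X := by
      have hXeq : X = u + w i + ((∑ t ∈ Finset.range (T+1), cp t (L t) i)
          - ∑ t ∈ Finset.range (T+1), cp t (Ψ t) i) := by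
        rw [hX, hu, hdotc i]; ring
      have hwi := (hw i).1
      linarith
    have hge2 : -(|u| + D) ≤ min 0 X := by
      refine le_min (by linarith [abs_nonneg u]) ?_
      have := neg_abs_le u
      linarith
    rw [abs_le]
    exact ⟨hge2, le_trans (min_le_left _ _) (add_nonneg (abs_nonneg _) hD0)⟩
  have hGf0 : 0 ≤ GfeaPop T k μ0 p cp γ0 π := norm2_nonneg' _
  have hGfmain : GfeaPop T k μ0 p cp γ0 π ≤ ε * ζ3 := by
    have hnorm : GfeaPop T k μ0 p cp γ0 π ≤
        norm2 (fun i => |γ0 i - dot (cLmat T k (fun t _ _ m => cp t m) L i) Lv - w i|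
          + ∑ t ∈ Finset.range (T+1), |cp t (Ψ t) i - cp t (L t) i|) := by
      unfold GfeaPop
      rw [← hΨdef]
      refine norm2_mono fun i => ?_
      exact (hentry i).trans (le_abs_self _)
    have hsplit := norm2_add_le
      (fun i => |γ0 i - dot (cLmat T k (fun t _ _ m => cp t m) L i) Lv - w i|)
      (fun i => ∑ t ∈ Finset.range (T+1), |cp t (Ψ t) i - cp t (L t) i|)
    have habs : norm2 (fun i => |γ0 i - dot (cLmat T k (fun t _ _ m => cp t m) L i) Lv - w i|)
        = norm2 (fun i => γ0 i - dot (cLmat T k (fun t _ _ m => cp t m) L i) Lv - w i) := by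
      unfold norm2
      congr 1
      exact Finset.sum_congr rfl fun i _ => by rw [sq_abs]
    have h2 : norm2 (fun i => ∑ t ∈ Finset.range (T+1), |cp t (Ψ t) i - cp t (L t) i|)
        ≤ Cc * (ε*α) := by
      refine (norm2_le_norm1 _).trans ?_
      have h3 : norm1 (fun i => ∑ t ∈ Finset.range (T+1), |cp t (Ψ t) i - cp t (L t) i|)
          = ∑ i, ∑ t ∈ Finset.range (T+1), |cp t (Ψ t) i - cp t (L t) i| :=
        Finset.sum_congr rfl fun i _ =>
          abs_of_nonneg (Finset.sum_nonneg fun _ _ => abs_nonneg _)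
      rw [h3]
      exact hΔsum
    have hG : GfeaPop T k μ0 p cp γ0 π ≤ ε/c4 + Cc*(ε*α) := by
      calc GfeaPop T k μ0 p cp γ0 π
          ≤ norm2 (fun i => |γ0 i - dot (cLmat T k (fun t _ _ m => cp t m) L i) Lv - w i|
            + ∑ t ∈ Finset.range (T+1), |cp t (Ψ t) i - cp t (L t) i|) := hnorm
        _ ≤ norm2 (fun i => |γ0 i - dot (cLmat T k (fun t _ _ m => cp t m) L i) Lv - w i|)
            + norm2 (fun i => ∑ t ∈ Finset.range (T+1), |cp t (Ψ t) i - cp t (L t) i|) :=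
            hsplit
        _ ≤ ε/c4 + Cc*(ε*α) := by
            rw [habs]
            exact add_le_add ht4 h2
    refine gfea_final hG hζ3 hεα0 hCc.le ?_
    exact Cc_le_W hCc hkcmax (Nat.one_le_cast.mpr hSpos)
      (Nat.one_le_cast.mpr hApos) (by linarith)
  refine ⟨⟨hGf0, hGfmain⟩, fun _ => ?_⟩
  -- optimality part
  have hψeq : psi μ0 p π Ψ = Ψ := by
    funext t
    rw [hΨdef]
    exact psiInd_eq_psi μ0 p π t
  have hΨlt : ∀ t, t < T → IsSimplex (Ψ t) := fun t ht => hΨsimp t (le_of_lt ht)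
  have hsqT : ∀ dv : Fin (T+1) × S × A → ℝ,
      (∀ t' : Fin (T+1), IsSimplex (fun sa : S × A => dv (t', sa.1, sa.2))) →
      norm2 dv ≤ ((T:ℝ)+2)/2 := by
    intro dv hslice
    have h1 : (∑ x : Fin (T+1) × S × A, (dv x)^2) ≤ ((T:ℝ)+1) := by
      calc (∑ x : Fin (T+1) × S × A, (dv x)^2)
          = ∑ t' : Fin (T+1), ∑ sa : S × A, (dv (t', sa))^2 :=
            Fintype.sum_prod_type (f := fun x : Fin (T+1) × S × A => (dv x)^2)
        _ ≤ ∑ _t' : Fin (T+1), (1:ℝ) := Finset.sum_le_sum fun t' _ => sum_sq_le_one (hslice t')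
        _ = ((T:ℝ)+1) := by simp
    calc norm2 dv ≤ Real.sqrt ((T:ℝ)+1) := Real.sqrt_le_sqrt h1
      _ ≤ ((T:ℝ)+2)/2 := sqrt_Tp1_le T
  have hVdot : ∀ π'' : ℕ → S → A → ℝ, V T μ0 p r π'' Ψ
      = dot (rLvec T r Ψ) (toVec T (psi μ0 p π'' Ψ)) := by
    intro π''
    calc V T μ0 p r π'' Ψ
        = ∑ t ∈ Finset.range (T+1), ∑ sa : S × A,
            r t sa.1 sa.2 (Ψ t) * psi μ0 p π'' Ψ t sa := rfl
      _ = ∑ t' : Fin (T+1), ∑ sa : S × A,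
            r (t':ℕ) sa.1 sa.2 (Ψ (t':ℕ)) * psi μ0 p π'' Ψ (t':ℕ) sa :=
          (Fin.sum_univ_eq_sum_range (fun t => ∑ sa : S × A,
            r t sa.1 sa.2 (Ψ t) * psi μ0 p π'' Ψ t sa) (T+1)).symm
      _ = dot (rLvec T r Ψ) (toVec T (psi μ0 p π'' Ψ)) :=
          (Fintype.sum_prod_type (f := fun x : Fin (T+1) × S × A =>
            rLvec T r Ψ x * toVec T (psi μ0 p π'' Ψ) x)).symm
  have hkey : ∀ π', IsPolicy π' →
      |dot (rLvec T r Ψ) (toVec T (psi μ0 p π' Ψ)) + dot y (bvec T μ0)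
        + dot z (toVec T (psi μ0 p π' Ψ))|
      ≤ (ε/c1)*(((T:ℝ)+2)/2) + βy'*(Cp*(ε*α)) + Cr*(ε*α) := by
    intro π' hπ'
    set dv : Fin (T+1) × S × A → ℝ := toVec T (psi μ0 p π' Ψ) with hdv
    have hslice : ∀ t' : Fin (T+1), IsSimplex (fun sa : S × A => dv (t', sa.1, sa.2)) := by
      intro t'
      exact psi_simplex T μ0 p π' Ψ hμ0 hπ' hp hΨlt (t':ℕ) (Nat.lt_succ_iff.mp t'.isLt)
    have hdv0 : ∀ x, 0 ≤ dv x := fun x => (hslice x.1).1 (x.2.1, x.2.2)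
    have hdvle1 : ∀ x, dv x ≤ 1 := fun x => simplex_entry_le_one (hslice x.1) (x.2.1, x.2.2)
    have hAocc : mulVec (ALmat T p Ψ) dv = bvec T μ0 := mulVec_AL_occ T μ0 p Ψ π' hπ'
    have hlin1 : dot (fun x => tmulVec (ALmat T p L) y x + z x + rLvec T r L x) dv
        = dot y (mulVec (ALmat T p L) dv) + dot z dv + dot (rLvec T r L) dv := by
      rw [← dot_tmulVec]
      unfold dot
      rw [← Finset.sum_add_distrib, ← Finset.sum_add_distrib]
      exact Finset.sum_congr rfl fun x _ => by ring
    have hlin2 : dot y (mulVec (ALmat T p L) dv)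
        = dot y (fun row => mulVec (ALmat T p L) dv row - mulVec (ALmat T p Ψ) dv row)
          + dot y (bvec T μ0) := by
      rw [← hAocc]
      unfold dot
      rw [← Finset.sum_add_distrib]
      exact Finset.sum_congr rfl fun row _ => by ring
    have hlin3 : dot (fun x => rLvec T r Ψ x - rLvec T r L x) dv
        = dot (rLvec T r Ψ) dv - dot (rLvec T r L) dv := by
      unfold dot
      rw [← Finset.sum_sub_distrib]
      exact Finset.sum_congr rfl fun x _ => by ring
    have hident : dot (rLvec T r Ψ) dv + dot y (bvec T μ0) + dot z dv
        = dot (fun x => tmulVec (ALmat T p L) y x + z x + rLvec T r L x) dv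
          - dot y (fun row => mulVec (ALmat T p L) dv row - mulVec (ALmat T p Ψ) dv row)
          + dot (fun x => rLvec T r Ψ x - rLvec T r L x) dv := by
      rw [hlin1, hlin2, hlin3]; ring
    have hbd1 : |dot (fun x => tmulVec (ALmat T p L) y x + z x + rLvec T r L x) dv|
        ≤ (ε/c1) * (((T:ℝ)+2)/2) := by
      refine (abs_dot_le _ _).trans ?_
      have hn2 := hsqT dv hslice
      have hεc1 : (0:ℝ) ≤ ε/c1 := by positivity
      exact mul_le_mul ht1 hn2 (norm2_nonneg' _) hεc1
    have hyb : ∀ row : Fin (T+1) × S, |y row| ≤ βy' := by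
      intro row
      rw [hβy']
      exact le_trans (Finset.single_le_sum (f := fun row => |y row|)
        (fun i _ => abs_nonneg _) (Finset.mem_univ row)) hy1
    have hDrow : ∀ t' : Fin (T+1), (∑ s, |mulVec (ALmat T p L) dv (t', s)
        - mulVec (ALmat T p Ψ) dv (t', s)|) ≤ Cp * e (t' : ℕ) := by
      intro t'
      by_cases h : (t' : ℕ) < T
      · have htT : (t' : ℕ) ≤ T := le_of_lt h
        have heq : ∀ s, mulVec (ALmat T p L) dv (t', s) - mulVec (ALmat T p Ψ) dv (t', s)
            = ∑ sa : S × A, (p (t':ℕ) sa.1 sa.2 (L (t':ℕ)) s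
              - p (t':ℕ) sa.1 sa.2 (Ψ (t':ℕ)) s) * dv (t', sa) := by
          intro s
          rw [mulVec_ALmat, mulVec_ALmat, dif_pos h, dif_pos h]
          have hr : ∀ a b m : ℝ, (a - m) - (b - m) = a - b := fun a b m => by ring
          rw [hr, ← Finset.sum_sub_distrib]
          exact Finset.sum_congr rfl fun sa _ => by ring
        calc (∑ s, |mulVec (ALmat T p L) dv (t', s) - mulVec (ALmat T p Ψ) dv (t', s)|)
            = ∑ s, |∑ sa : S × A, (p (t':ℕ) sa.1 sa.2 (L (t':ℕ)) s
              - p (t':ℕ) sa.1 sa.2 (Ψ (t':ℕ)) s) * dv (t', sa)| :=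
              Finset.sum_congr rfl fun s _ => by rw [heq s]
          _ ≤ ∑ sa : S × A, ∑ s, |p (t':ℕ) sa.1 sa.2 (L (t':ℕ)) s
              - p (t':ℕ) sa.1 sa.2 (Ψ (t':ℕ)) s| :=
              sum_abs_diff_le (fun sa => hdv0 (t', sa)) (fun sa => hdvle1 (t', sa))
          _ ≤ Cp * norm1 (fun sa => L (t':ℕ) sa - Ψ (t':ℕ) sa) :=
              (hlips (t':ℕ) htT (L (t':ℕ)) (Ψ (t':ℕ))
                (hLsimp (t':ℕ) htT) (hΨsimp (t':ℕ) htT)).1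
          _ = Cp * e (t':ℕ) := by
              congr 1
              exact Finset.sum_congr rfl fun sa _ => abs_sub_comm _ _
      · have heq0 : ∀ s, mulVec (ALmat T p L) dv (t', s)
            - mulVec (ALmat T p Ψ) dv (t', s) = 0 := by
          intro s
          rw [mulVec_ALmat, mulVec_ALmat, dif_neg h, dif_neg h, sub_self]
        calc (∑ s, |mulVec (ALmat T p L) dv (t', s) - mulVec (ALmat T p Ψ) dv (t', s)|)
            = ∑ _s : S, (0:ℝ) := Finset.sum_congr rfl fun s _ => by rw [heq0 s, abs_zero]
          _ = 0 := by simp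
          _ ≤ Cp * e (t':ℕ) := mul_nonneg hCp.le (he0 _)
    have hDsum : (∑ row : Fin (T+1) × S, |mulVec (ALmat T p L) dv row
        - mulVec (ALmat T p Ψ) dv row|) ≤ Cp * (ε*α) := by
      calc (∑ row : Fin (T+1) × S, |mulVec (ALmat T p L) dv row
            - mulVec (ALmat T p Ψ) dv row|)
          = ∑ t' : Fin (T+1), ∑ s, |mulVec (ALmat T p L) dv (t', s)
            - mulVec (ALmat T p Ψ) dv (t', s)| :=
            Fintype.sum_prod_type (f := fun row : Fin (T+1) × S =>
              |mulVec (ALmat T p L) dv row - mulVec (ALmat T p Ψ) dv row|)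
        _ ≤ ∑ t' : Fin (T+1), Cp * e (t':ℕ) := Finset.sum_le_sum fun t' _ => hDrow t'
        _ = Cp * ∑ t' : Fin (T+1), e (t':ℕ) := by rw [← Finset.mul_sum]
        _ = Cp * ∑ t ∈ Finset.range (T+1), e t := by
            rw [Fin.sum_univ_eq_sum_range (fun t => e t) (T+1)]
        _ ≤ Cp * (ε*α) := mul_le_mul_of_nonneg_left hEsum hCp.le
    have hbd2 : |dot y (fun row => mulVec (ALmat T p L) dv row
        - mulVec (ALmat T p Ψ) dv row)| ≤ βy' * (Cp * (ε*α)) := by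
      calc |dot y (fun row => mulVec (ALmat T p L) dv row - mulVec (ALmat T p Ψ) dv row)|
          ≤ ∑ row : Fin (T+1) × S, |y row * (mulVec (ALmat T p L) dv row
            - mulVec (ALmat T p Ψ) dv row)| := Finset.abs_sum_le_sum_abs _ _
        _ ≤ ∑ row : Fin (T+1) × S, βy' * |mulVec (ALmat T p L) dv row
            - mulVec (ALmat T p Ψ) dv row| := by
            refine Finset.sum_le_sum fun row _ => ?_
            rw [abs_mul]
            exact mul_le_mul_of_nonneg_right (hyb row) (abs_nonneg _)
        _ = βy' * ∑ row : Fin (T+1) × S, |mulVec (ALmat T p L) dv row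
            - mulVec (ALmat T p Ψ) dv row| := by rw [Finset.mul_sum]
        _ ≤ βy' * (Cp * (ε*α)) := mul_le_mul_of_nonneg_left hDsum hβy'0
    have hbd3 : |dot (fun x => rLvec T r Ψ x - rLvec T r L x) dv| ≤ Cr * (ε*α) := by
      calc |dot (fun x => rLvec T r Ψ x - rLvec T r L x) dv|
          ≤ ∑ x : Fin (T+1) × S × A, |(rLvec T r Ψ x - rLvec T r L x) * dv x| :=
            Finset.abs_sum_le_sum_abs _ _
        _ ≤ ∑ x : Fin (T+1) × S × A, |rLvec T r Ψ x - rLvec T r L x| := by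
            refine Finset.sum_le_sum fun x _ => ?_
            rw [abs_mul, abs_of_nonneg (hdv0 x)]
            exact le_trans (mul_le_mul_of_nonneg_left (hdvle1 x) (abs_nonneg _))
              (le_of_eq (mul_one _))
        _ = ∑ t' : Fin (T+1), ∑ sa : S × A,
            |r (t':ℕ) sa.1 sa.2 (Ψ (t':ℕ)) - r (t':ℕ) sa.1 sa.2 (L (t':ℕ))| :=
            Fintype.sum_prod_type (f := fun x : Fin (T+1) × S × A =>
              |rLvec T r Ψ x - rLvec T r L x|)
        _ ≤ ∑ t' : Fin (T+1), Cr * e (t':ℕ) := by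
            refine Finset.sum_le_sum fun t' _ => ?_
            have htT : (t':ℕ) ≤ T := Nat.lt_succ_iff.mp t'.isLt
            exact (hlips (t':ℕ) htT (Ψ (t':ℕ)) (L (t':ℕ))
              (hΨsimp (t':ℕ) htT) (hLsimp (t':ℕ) htT)).2.1
        _ = Cr * ∑ t' : Fin (T+1), e (t':ℕ) := by rw [← Finset.mul_sum]
        _ = Cr * ∑ t ∈ Finset.range (T+1), e t := by
            rw [Fin.sum_univ_eq_sum_range (fun t => e t) (T+1)]
        _ ≤ Cr * (ε*α) := mul_le_mul_of_nonneg_left hEsum hCr.le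
    calc |dot (rLvec T r Ψ) dv + dot y (bvec T μ0) + dot z dv|
        = |dot (fun x => tmulVec (ALmat T p L) y x + z x + rLvec T r L x) dv
          - dot y (fun row => mulVec (ALmat T p L) dv row - mulVec (ALmat T p Ψ) dv row)
          + dot (fun x => rLvec T r Ψ x - rLvec T r L x) dv| := by rw [hident]
      _ ≤ |dot (fun x => tmulVec (ALmat T p L) y x + z x + rLvec T r L x) dv
          - dot y (fun row => mulVec (ALmat T p L) dv row - mulVec (ALmat T p Ψ) dv row)|
          + |dot (fun x => rLvec T r Ψ x - rLvec T r L x) dv| := abs_add_le _ _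
      _ ≤ |dot (fun x => tmulVec (ALmat T p L) y x + z x + rLvec T r L x) dv|
          + |dot y (fun row => mulVec (ALmat T p L) dv row - mulVec (ALmat T p Ψ) dv row)|
          + |dot (fun x => rLvec T r Ψ x - rLvec T r L x) dv| :=
          add_le_add_left (abs_sub _ _) _
      _ ≤ (ε/c1)*(((T:ℝ)+2)/2) + βy'*(Cp*(ε*α)) + Cr*(ε*α) :=
          add_le_add (add_le_add hbd1 hbd2) hbd3
  -- z-dot bound at the induced flow
  have hzb : ∀ x : Fin (T+1) × S × A, |z x| ≤ βz' := by
    intro x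
    rw [hβz']
    exact le_trans (Finset.single_le_sum (f := fun x => |z x|)
      (fun i _ => abs_nonneg _) (Finset.mem_univ x)) hz1
  have hdiffsum : (∑ x : Fin (T+1) × S × A, |toVec T Ψ x - Lv x|)
      = ∑ t ∈ Finset.range (T+1), e t := by
    calc (∑ x : Fin (T+1) × S × A, |toVec T Ψ x - Lv x|)
        = ∑ t' : Fin (T+1), ∑ sa : S × A, |Ψ (t':ℕ) sa - L (t':ℕ) sa| := by
          rw [Fintype.sum_prod_type (f := fun x : Fin (T+1) × S × A => |toVec T Ψ x - Lv x|)]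
          refine Finset.sum_congr rfl fun t' _ => Finset.sum_congr rfl fun sa _ => ?_
          rw [hLval t' sa]
          rfl
      _ = ∑ t ∈ Finset.range (T+1), e t := Fin.sum_univ_eq_sum_range (fun t => e t) (T+1)
  have hzdot : dot z (toVec T Ψ) ≤ ε/c3 + βz'*(ε*α) := by
    have h1 : dot z (toVec T Ψ) - dot z Lv ≤ βz' * (ε*α) := by
      calc dot z (toVec T Ψ) - dot z Lv
          = ∑ x : Fin (T+1) × S × A, z x * (toVec T Ψ x - Lv x) := by
            unfold dot
            rw [← Finset.sum_sub_distrib]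
            exact Finset.sum_congr rfl fun x _ => by ring
        _ ≤ ∑ x : Fin (T+1) × S × A, βz' * |toVec T Ψ x - Lv x| := by
            refine Finset.sum_le_sum fun x _ => ?_
            calc z x * (toVec T Ψ x - Lv x) ≤ |z x * (toVec T Ψ x - Lv x)| := le_abs_self _
              _ = |z x| * |toVec T Ψ x - Lv x| := abs_mul _ _
              _ ≤ βz' * |toVec T Ψ x - Lv x| :=
                  mul_le_mul_of_nonneg_right (hzb x) (abs_nonneg _)
        _ = βz' * ∑ x : Fin (T+1) × S × A, |toVec T Ψ x - Lv x| := by rw [Finset.mul_sum]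
        _ = βz' * ∑ t ∈ Finset.range (T+1), e t := by rw [hdiffsum]
        _ ≤ βz' * (ε*α) := mul_le_mul_of_nonneg_left hEsum hβz'0
    have ht3' : dot z Lv ≤ ε/c3 := ht3
    linarith [ht3']
  set E0 : ℝ := (ε/c1)*(((T:ℝ)+2)/2) + βy'*(Cp*(ε*α)) + Cr*(ε*α) with hE0
  have hVle : ∀ π', IsPolicy π' → V T μ0 p r π' Ψ ≤ -(dot y (bvec T μ0)) + E0 := by
    intro π' hπ'
    have hk := hkey π' hπ'
    have hz0' : 0 ≤ dot z (toVec T (psi μ0 p π' Ψ)) := by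
      refine Finset.sum_nonneg fun x _ => mul_nonneg (hz0 x) ?_
      exact (psi_simplex T μ0 p π' Ψ hμ0 hπ' hp hΨlt (x.1:ℕ)
        (Nat.lt_succ_iff.mp x.1.isLt)).1 (x.2.1, x.2.2)
    rw [hVdot π']
    have h2 := (abs_le.mp hk).2
    linarith
  have hVge : -(dot y (bvec T μ0)) - E0 - (ε/c3 + βz'*(ε*α)) ≤ V T μ0 p r π Ψ := by
    have hk := hkey π hπ
    rw [hψeq] at hk
    rw [hVdot π, hψeq]
    have h1 := (abs_le.mp hk).1
    exact sandwich1 h1 hzdot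
  have hub : ∀ v ∈ {v | ∃ π', IsPolicy π' ∧ v = V T μ0 p r π' Ψ},
      v ≤ V T μ0 p r π Ψ + (2*E0 + (ε/c3 + βz'*(ε*α))) := by
    rintro v ⟨π', hπ', rfl⟩
    have h1 := hVle π' hπ'
    exact sandwich2 h1 hVge
  have hmem : V T μ0 p r π Ψ ∈ {v | ∃ π', IsPolicy π' ∧ v = V T μ0 p r π' Ψ} :=
    ⟨π, hπ, rfl⟩
  have hbdd : BddAbove {v | ∃ π', IsPolicy π' ∧ v = V T μ0 p r π' Ψ} :=
    ⟨_, fun v hv => hub v hv⟩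
  have hne : {v | ∃ π', IsPolicy π' ∧ v = V T μ0 p r π' Ψ}.Nonempty := ⟨_, hmem⟩
  have hcoef0 : 0 ≤ Cp*βy' + Cr := add_nonneg (mul_nonneg hCp.le hβy'0) hCr.le
  have hfin : 2*E0 + (ε/c3 + βz'*(ε*α)) ≤ ε*(((T:ℝ)+2)*ζ1' + ζ2') := by
    rw [hE0]
    exact gopt_final T hε hεα0 hcoef0 hζ1' hζ2'
  constructor
  · unfold GoptPop VstarU
    rw [← hΨdef]
    have := le_csSup hbdd hmem
    linarith
  · unfold GoptPop VstarU
    rw [← hΨdef]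
    have hsup := csSup_le hne (fun v hv => hub v hv)
    linarith

end CMFG
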